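/- arXiv:math/0507555 — 3 statements merged into one kernel-verified Lean document; each statement's English description precedes it below -/
import Mathlib

section
/- Let F and F₀ be two nondegenerate homogeneous polynomial maps of degree d on ℂ^{k+1}, and let c ≥ 0 be such that |G_{F₀}(F(z)) − G_{F₀}(F₀(z))| ≤ c for every z with ‖z‖ = 1. Then sup_{z ∈ ℂ^{k+1} \ {0}} |G_F(z) − G_{F₀}(z)| ≤ c/(d−1). -/
open Filter Topology

noncomputable section

/-- `F` is a map `ℂ^{k+1} → ℂ^{k+1}` each of whose components is a homogeneous
polynomial of degree `d` in the coordinates. -/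
def IsHomPoly (k d : ℕ)
    (F : EuclideanSpace ℂ (Fin (k + 1)) → EuclideanSpace ℂ (Fin (k + 1))) : Prop :=
  ∀ i : Fin (k + 1), ∃ P : MvPolynomial (Fin (k + 1)) ℂ,
    P.IsHomogeneous d ∧ ∀ z, F z i = MvPolynomial.eval (fun j => z j) P

/-- `F` is nondegenerate: `F z = 0` implies `z = 0`. -/
def IsNondeg (k : ℕ)
    (F : EuclideanSpace ℂ (Fin (k + 1)) → EuclideanSpace ℂ (Fin (k + 1))) : Prop :=
  ∀ z, F z = 0 → z = 0

/-- `G` is the Green function of `F` (of degree `d`): for every `z ≠ 0`,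
`d^{-n} log ‖F^n z‖ → G z`. -/
def IsGreen (k d : ℕ)
    (F : EuclideanSpace ℂ (Fin (k + 1)) → EuclideanSpace ℂ (Fin (k + 1)))
    (G : EuclideanSpace ℂ (Fin (k + 1)) → ℝ) : Prop :=
  ∀ z, z ≠ 0 →
    Tendsto (fun n : ℕ => ((d : ℝ) ^ n)⁻¹ * Real.log ‖F^[n] z‖) atTop (nhds (G z))

lemma eval_scale {m d : ℕ} {P : MvPolynomial (Fin m) ℂ} (h : P.IsHomogeneous d)
    (a : ℂ) (x : Fin m → ℂ) :
    MvPolynomial.eval (fun j => a * x j) P = a ^ d * MvPolynomial.eval x P := by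
  rw [MvPolynomial.eval_eq', MvPolynomial.eval_eq', Finset.mul_sum]
  apply Finset.sum_congr rfl
  intro μ hμ
  have hc : MvPolynomial.coeff μ P ≠ 0 := MvPolynomial.mem_support_iff.mp hμ
  have hdeg : μ.degree = d := by
    by_contra hne
    exact hc (h.coeff_eq_zero hne)
  have hsum : ∑ j, μ j = d := by
    rw [← hdeg, Finsupp.degree]
    exact (Finset.sum_subset (Finset.subset_univ _) (fun j _ hj => Finsupp.notMem_support_iff.mp hj)).symm
  calc MvPolynomial.coeff μ P * ∏ j, (a * x j) ^ μ j
      = MvPolynomial.coeff μ P * ((∏ j, a ^ μ j) * ∏ j, x j ^ μ j) := by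
        rw [← Finset.prod_mul_distrib]; simp_rw [mul_pow]
    _ = a ^ d * (MvPolynomial.coeff μ P * ∏ j, x j ^ μ j) := by
        rw [Finset.prod_pow_eq_pow_sum, hsum]; ring

variable {k d : ℕ}

lemma homPoly_smul {F : EuclideanSpace ℂ (Fin (k + 1)) → EuclideanSpace ℂ (Fin (k + 1))}
    (hpoly : IsHomPoly k d F) (a : ℂ) (z : EuclideanSpace ℂ (Fin (k + 1))) :
    F (a • z) = a ^ d • F z := by
  ext i
  obtain ⟨P, hP, hPe⟩ := hpoly i
  have h1 : (fun j => (a • z) j) = fun j => a * z j := rfl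
  rw [hPe, h1, eval_scale hP, ← hPe]
  rfl

lemma homPoly_cont {F : EuclideanSpace ℂ (Fin (k + 1)) → EuclideanSpace ℂ (Fin (k + 1))}
    (hpoly : IsHomPoly k d F) : Continuous F := by
  have h : Continuous fun z : EuclideanSpace ℂ (Fin (k + 1)) =>
      (WithLp.equiv 2 (Fin (k + 1) → ℂ)).symm (fun i => F z i) := by
    apply (PiLp.continuous_toLp 2 fun _ : Fin (k+1) => ℂ).comp
    apply continuous_pi
    intro i
    obtain ⟨P, hP, hPe⟩ := hpoly i
    simp_rw [hPe]
    exact (MvPolynomial.continuous_eval P).comp (PiLp.continuous_ofLp 2 fun _ : Fin (k+1) => ℂ)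
  exact h

lemma iter_ne {F : EuclideanSpace ℂ (Fin (k + 1)) → EuclideanSpace ℂ (Fin (k + 1))}
    (hnd : IsNondeg k F) {z : EuclideanSpace ℂ (Fin (k + 1))} (hz : z ≠ 0) (n : ℕ) :
    F^[n] z ≠ 0 := by
  induction n with
  | zero => simpa using hz
  | succ n ih =>
    rw [Function.iterate_succ_apply']
    intro h
    exact ih (hnd _ h)

lemma log_bound {F : EuclideanSpace ℂ (Fin (k + 1)) → EuclideanSpace ℂ (Fin (k + 1))}
    (hd : 2 ≤ d) (hpoly : IsHomPoly k d F) (hnd : IsNondeg k F) :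
    ∃ C : ℝ, 0 ≤ C ∧ ∀ z : EuclideanSpace ℂ (Fin (k + 1)), z ≠ 0 →
      |Real.log ‖F z‖ - (d : ℝ) * Real.log ‖z‖| ≤ C := by
  have hcomp : IsCompact (Metric.sphere (0 : EuclideanSpace ℂ (Fin (k + 1))) 1) :=
    isCompact_sphere 0 1
  have hne : (Metric.sphere (0 : EuclideanSpace ℂ (Fin (k + 1))) 1).Nonempty :=
    NormedSpace.sphere_nonempty.mpr zero_le_one
  have hcont : ContinuousOn (fun z => ‖F z‖) (Metric.sphere (0 : EuclideanSpace ℂ (Fin (k + 1))) 1) :=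
    ((homPoly_cont hpoly).norm).continuousOn
  obtain ⟨u, hu, humin⟩ := hcomp.exists_isMinOn hne hcont
  obtain ⟨v, hv, hvmax⟩ := hcomp.exists_isMaxOn hne hcont
  have hune : u ≠ 0 := by
    intro h; rw [h] at hu; simp at hu
  have hm : 0 < ‖F u‖ := by
    rw [norm_pos_iff]
    intro h
    exact hune (hnd u h)
  refine ⟨max |Real.log ‖F u‖| |Real.log ‖F v‖|, le_trans (abs_nonneg _) (le_max_left _ _), ?_⟩
  intro z hz
  set r : ℝ := ‖z‖ with hr
  have hrpos : 0 < r := norm_pos_iff.mpr hz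
  set w : EuclideanSpace ℂ (Fin (k + 1)) := ((r⁻¹ : ℝ) : ℂ) • z with hw
  have hwnorm : ‖w‖ = 1 := by
    rw [hw, norm_smul]
    simp only [Complex.norm_real, Real.norm_eq_abs, abs_inv, abs_of_pos hrpos]
    exact inv_mul_cancel₀ hrpos.ne'
  have hzw : z = ((r : ℝ) : ℂ) • w := by
    rw [hw, smul_smul, ← Complex.ofReal_mul, mul_inv_cancel₀ hrpos.ne']
    simp
  have hFz : ‖F z‖ = r ^ d * ‖F w‖ := by
    rw [hzw, homPoly_smul hpoly, norm_smul, norm_pow, Complex.norm_real,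
      Real.norm_eq_abs, abs_of_pos hrpos]
  have hwsphere : w ∈ Metric.sphere (0 : EuclideanSpace ℂ (Fin (k + 1))) 1 := by
    simp [hwnorm]
  have hwne : w ≠ 0 := by
    intro h; rw [h] at hwnorm; simp at hwnorm
  have hFw : 0 < ‖F w‖ := by
    rw [norm_pos_iff]; intro h; exact hwne (hnd w h)
  have hlog : Real.log ‖F z‖ = (d : ℝ) * Real.log r + Real.log ‖F w‖ := by
    rw [hFz, Real.log_mul (by positivity) hFw.ne', Real.log_pow]
  rw [hlog]
  have habs : |Real.log ‖F w‖| ≤ max |Real.log ‖F u‖| |Real.log ‖F v‖| := by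
    have h1 : Real.log ‖F u‖ ≤ Real.log ‖F w‖ := Real.log_le_log hm (humin hwsphere)
    have h2 : Real.log ‖F w‖ ≤ Real.log ‖F v‖ := Real.log_le_log hFw (hvmax hwsphere)
    rw [abs_le]
    refine ⟨?_, ?_⟩
    · calc -(max |Real.log ‖F u‖| |Real.log ‖F v‖|) ≤ -|Real.log ‖F u‖| :=
            neg_le_neg (le_max_left _ _)
        _ ≤ Real.log ‖F u‖ := neg_abs_le _
        _ ≤ Real.log ‖F w‖ := h1
    · calc Real.log ‖F w‖ ≤ Real.log ‖F v‖ := h2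
        _ ≤ |Real.log ‖F v‖| := le_abs_self _
        _ ≤ _ := le_max_right _ _
  have heq : (d : ℝ) * Real.log r + Real.log ‖F w‖ - (d : ℝ) * Real.log ‖z‖
      = Real.log ‖F w‖ := by rw [← hr]; ring
  rw [heq]
  exact habs

lemma iter_smul {F : EuclideanSpace ℂ (Fin (k + 1)) → EuclideanSpace ℂ (Fin (k + 1))}
    (hpoly : IsHomPoly k d F) (a : ℂ) (z : EuclideanSpace ℂ (Fin (k + 1))) (n : ℕ) :
    F^[n] (a • z) = a ^ (d ^ n) • F^[n] z := by
  induction n with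
  | zero => simp
  | succ n ih =>
    rw [Function.iterate_succ_apply', ih, homPoly_smul hpoly,
      Function.iterate_succ_apply', ← pow_mul, ← pow_succ]

lemma green_smul {F : EuclideanSpace ℂ (Fin (k + 1)) → EuclideanSpace ℂ (Fin (k + 1))}
    {G : EuclideanSpace ℂ (Fin (k + 1)) → ℝ} (hd : 2 ≤ d)
    (hpoly : IsHomPoly k d F) (hnd : IsNondeg k F) (hG : IsGreen k d F G)
    {r : ℝ} (hr : 0 < r) {z : EuclideanSpace ℂ (Fin (k + 1))} (hz : z ≠ 0) :
    G ((r : ℂ) • z) = Real.log r + G z := by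
  have hdpos : (0:ℝ) < (d:ℝ) := by positivity
  have hzs : ((r:ℂ) • z) ≠ 0 := smul_ne_zero (by exact_mod_cast hr.ne') hz
  have hseq : ∀ n : ℕ, ((d : ℝ) ^ n)⁻¹ * Real.log ‖F^[n] ((r:ℂ) • z)‖
      = Real.log r + ((d : ℝ) ^ n)⁻¹ * Real.log ‖F^[n] z‖ := by
    intro n
    have h1 : ‖F^[n] ((r:ℂ) • z)‖ = r ^ (d ^ n) * ‖F^[n] z‖ := by
      rw [iter_smul hpoly, norm_smul, norm_pow, Complex.norm_real, Real.norm_eq_abs,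
        abs_of_pos hr]
    have h2 : (0:ℝ) < ‖F^[n] z‖ := norm_pos_iff.mpr (iter_ne hnd hz n)
    rw [h1, Real.log_mul (by positivity) h2.ne', Real.log_pow]
    have hdn : ((d:ℝ) ^ n) ≠ 0 := by positivity
    push_cast
    field_simp
  have hlim1 : Tendsto (fun n : ℕ => ((d : ℝ) ^ n)⁻¹ * Real.log ‖F^[n] ((r:ℂ) • z)‖)
      atTop (nhds (Real.log r + G z)) := by
    simp_rw [hseq]
    exact (hG z hz).const_add _
  exact tendsto_nhds_unique (hG _ hzs) hlim1

lemma green_funeq {F : EuclideanSpace ℂ (Fin (k + 1)) → EuclideanSpace ℂ (Fin (k + 1))}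
    {G : EuclideanSpace ℂ (Fin (k + 1)) → ℝ} (hd : 2 ≤ d)
    (hnd : IsNondeg k F) (hG : IsGreen k d F G)
    {z : EuclideanSpace ℂ (Fin (k + 1))} (hz : z ≠ 0) :
    G (F z) = (d : ℝ) * G z := by
  have hdne : ((d:ℝ)) ≠ 0 := by positivity
  have hFz : F z ≠ 0 := by
    intro h
    exact hz (hnd z h)
  have hshift : Tendsto (fun n : ℕ => ((d : ℝ) ^ (n+1))⁻¹ * Real.log ‖F^[n+1] z‖)
      atTop (nhds (G z)) := (hG z hz).comp (tendsto_add_atTop_nat 1)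
  have hmul : Tendsto (fun n : ℕ => (d:ℝ) * (((d : ℝ) ^ (n+1))⁻¹ * Real.log ‖F^[n+1] z‖))
      atTop (nhds ((d:ℝ) * G z)) := hshift.const_mul _
  have heq : ∀ n : ℕ, (d:ℝ) * (((d : ℝ) ^ (n+1))⁻¹ * Real.log ‖F^[n+1] z‖)
      = ((d : ℝ) ^ n)⁻¹ * Real.log ‖F^[n] (F z)‖ := by
    intro n
    rw [← Function.iterate_succ_apply]
    rw [pow_succ]
    field_simp
  simp_rw [heq] at hmul
  exact tendsto_nhds_unique (hG _ hFz) hmul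

lemma tele (hd : 2 ≤ d) (b : ℕ → ℝ) (L A : ℝ) (hA : 0 ≤ A)
    (hstep : ∀ n, |b (n+1) - b n| ≤ A * ((d:ℝ)^(n+1))⁻¹)
    (hlim : Tendsto b atTop (nhds L)) : |L - b 0| ≤ A / ((d:ℝ)-1) := by
  have hd1 : (1:ℝ) < (d:ℝ) := by exact_mod_cast lt_of_lt_of_le one_lt_two (by exact_mod_cast hd)
  have hr0 : (0:ℝ) ≤ (d:ℝ)⁻¹ := by positivity
  have hr1 : (d:ℝ)⁻¹ < 1 := inv_lt_one_of_one_lt₀ hd1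
  have key : ∀ n, |b n - b 0| ≤ A / ((d:ℝ) - 1) := by
    intro n
    have h1 : b n - b 0 = ∑ j ∈ Finset.range n, (b (j+1) - b j) :=
      (Finset.sum_range_sub b n).symm
    rw [h1]
    calc |∑ j ∈ Finset.range n, (b (j+1) - b j)|
        ≤ ∑ j ∈ Finset.range n, |b (j+1) - b j| := Finset.abs_sum_le_sum_abs _ _
      _ ≤ ∑ j ∈ Finset.range n, A * ((d:ℝ)^(j+1))⁻¹ :=
          Finset.sum_le_sum (fun j _ => hstep j)
      _ = A * (d:ℝ)⁻¹ * ∑ j ∈ Finset.range n, ((d:ℝ)⁻¹)^j := by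
          rw [Finset.mul_sum]
          apply Finset.sum_congr rfl
          intro j _
          rw [← inv_pow, pow_succ']
          ring
      _ ≤ A * (d:ℝ)⁻¹ * (1 - (d:ℝ)⁻¹)⁻¹ := by
          apply mul_le_mul_of_nonneg_left _ (by positivity)
          exact Summable.sum_le_tsum (Finset.range n) (fun i _ => by positivity)
            (summable_geometric_of_lt_one hr0 hr1) |>.trans_eq
            (tsum_geometric_of_lt_one hr0 hr1)
      _ = A / ((d:ℝ) - 1) := by
          have hdd : (d:ℝ) ≠ 0 := by positivity
          have hdd1 : (d:ℝ) - 1 ≠ 0 := by linarith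
          field_simp
  have hlim2 : Tendsto (fun n => |b n - b 0|) atTop (nhds |L - b 0|) :=
    ((hlim.sub tendsto_const_nhds).abs)
  exact le_of_tendsto' hlim2 key

lemma green_log_bound {F : EuclideanSpace ℂ (Fin (k + 1)) → EuclideanSpace ℂ (Fin (k + 1))}
    {G : EuclideanSpace ℂ (Fin (k + 1)) → ℝ} (hd : 2 ≤ d)
    (hnd : IsNondeg k F) (hG : IsGreen k d F G)
    {C : ℝ} (hC : 0 ≤ C)
    (hCb : ∀ z : EuclideanSpace ℂ (Fin (k + 1)), z ≠ 0 →
      |Real.log ‖F z‖ - (d : ℝ) * Real.log ‖z‖| ≤ C)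
    {z : EuclideanSpace ℂ (Fin (k + 1))} (hz : z ≠ 0) :
    |G z - Real.log ‖z‖| ≤ C / ((d:ℝ) - 1) := by
  have := tele hd (fun n => ((d : ℝ) ^ n)⁻¹ * Real.log ‖F^[n] z‖) (G z) C hC ?_ (hG z hz)
  · simpa using this
  intro n
  have h1 : F^[n+1] z = F (F^[n] z) := Function.iterate_succ_apply' F n z
  have h2 : ((d : ℝ) ^ (n+1))⁻¹ * Real.log ‖F^[n+1] z‖ - ((d : ℝ) ^ n)⁻¹ * Real.log ‖F^[n] z‖
      = ((d : ℝ) ^ (n+1))⁻¹ * (Real.log ‖F (F^[n] z)‖ - (d:ℝ) * Real.log ‖F^[n] z‖) := by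
    rw [h1, pow_succ]
    have hdne : ((d:ℝ)) ≠ 0 := by positivity
    have hdn : ((d:ℝ) ^ n) ≠ 0 := by positivity
    field_simp
  rw [h2, abs_mul, abs_inv, abs_pow, Nat.abs_cast, mul_comm]
  exact mul_le_mul_of_nonneg_right (hCb _ (iter_ne hnd hz n)) (by positivity)

theorem stmt9 (k d : ℕ) (hk : 1 ≤ k) (hd : 2 ≤ d)
    (F F₀ : EuclideanSpace ℂ (Fin (k + 1)) → EuclideanSpace ℂ (Fin (k + 1)))
    (hpoly : IsHomPoly k d F) (hnd : IsNondeg k F)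
    (hpoly₀ : IsHomPoly k d F₀) (hnd₀ : IsNondeg k F₀)
    (G G₀ : EuclideanSpace ℂ (Fin (k + 1)) → ℝ)
    (hG : IsGreen k d F G) (hG₀ : IsGreen k d F₀ G₀)
    (c : ℝ) (hc : 0 ≤ c)
    (hbound : ∀ z : EuclideanSpace ℂ (Fin (k + 1)), ‖z‖ = 1 →
      |G₀ (F z) - G₀ (F₀ z)| ≤ c) :
    ∀ z : EuclideanSpace ℂ (Fin (k + 1)), z ≠ 0 →
      |G z - G₀ z| ≤ c / ((d : ℝ) - 1) := by
  -- bound for F₀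
  obtain ⟨C₀, hC₀, hC₀b⟩ := log_bound hd hpoly₀ hnd₀
  set K : ℝ := C₀ / ((d:ℝ) - 1) with hK
  have hd1 : (1:ℝ) < (d:ℝ) := by exact_mod_cast lt_of_lt_of_le one_lt_two (by exact_mod_cast hd)
  have hKnn : 0 ≤ K := div_nonneg hC₀ (by linarith)
  have hG₀log : ∀ w : EuclideanSpace ℂ (Fin (k + 1)), w ≠ 0 →
      |G₀ w - Real.log ‖w‖| ≤ K := fun w hw => green_log_bound hd hnd₀ hG₀ hC₀ hC₀b hw
  -- extended bound
  have hext : ∀ w : EuclideanSpace ℂ (Fin (k + 1)), w ≠ 0 →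
      |G₀ (F w) - G₀ (F₀ w)| ≤ c := by
    intro w hw
    set r : ℝ := ‖w‖ with hr
    have hrpos : 0 < r := norm_pos_iff.mpr hw
    set u : EuclideanSpace ℂ (Fin (k + 1)) := ((r⁻¹ : ℝ) : ℂ) • w with huw
    have hunorm : ‖u‖ = 1 := by
      rw [huw, norm_smul]
      simp only [Complex.norm_real, Real.norm_eq_abs, abs_inv, abs_of_pos hrpos]
      exact inv_mul_cancel₀ hrpos.ne'
    have hune : u ≠ 0 := by intro h; rw [h] at hunorm; simp at hunorm
    have hwu : w = ((r : ℝ) : ℂ) • u := by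
      rw [huw, smul_smul, ← Complex.ofReal_mul, mul_inv_cancel₀ hrpos.ne']
      simp
    have hFune : F u ≠ 0 := fun h => hune (hnd u h)
    have hF₀une : F₀ u ≠ 0 := fun h => hune (hnd₀ u h)
    have hrd : (0:ℝ) < r ^ d := by positivity
    have e1 : G₀ (F w) = Real.log (r ^ d) + G₀ (F u) := by
      rw [hwu, homPoly_smul hpoly, ← Complex.ofReal_pow]
      exact green_smul hd hpoly₀ hnd₀ hG₀ hrd hFune
    have e2 : G₀ (F₀ w) = Real.log (r ^ d) + G₀ (F₀ u) := by
      rw [hwu, homPoly_smul hpoly₀, ← Complex.ofReal_pow]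
      exact green_smul hd hpoly₀ hnd₀ hG₀ hrd hF₀une
    rw [e1, e2]
    have : Real.log (r ^ d) + G₀ (F u) - (Real.log (r ^ d) + G₀ (F₀ u))
        = G₀ (F u) - G₀ (F₀ u) := by ring
    rw [this]
    exact hbound u hunorm
  intro z hz
  -- the sequence a n
  set a : ℕ → ℝ := fun n => ((d : ℝ) ^ n)⁻¹ * G₀ (F^[n] z) with ha
  have hwne : ∀ n, F^[n] z ≠ 0 := iter_ne hnd hz
  -- a tends to G z
  have halim : Tendsto a atTop (nhds (G z)) := by
    have hdecomp : ∀ n, a n = ((d : ℝ) ^ n)⁻¹ * Real.log ‖F^[n] z‖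
        + ((d : ℝ) ^ n)⁻¹ * (G₀ (F^[n] z) - Real.log ‖F^[n] z‖) := by
      intro n; rw [ha]; ring
    have he : Tendsto (fun n => ((d : ℝ) ^ n)⁻¹ * (G₀ (F^[n] z) - Real.log ‖F^[n] z‖))
        atTop (nhds 0) := by
      refine squeeze_zero_norm (a := fun n : ℕ => ((d:ℝ)⁻¹)^n * K) ?_ ?_
      · intro n
        rw [Real.norm_eq_abs, abs_mul, abs_inv, abs_pow, Nat.abs_cast, ← inv_pow]
        exact mul_le_mul_of_nonneg_left (hG₀log _ (hwne n)) (by positivity)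
      · have : Tendsto (fun n : ℕ => ((d:ℝ)⁻¹)^n) atTop (nhds 0) :=
          tendsto_pow_atTop_nhds_zero_of_lt_one (by positivity) (inv_lt_one_of_one_lt₀ hd1)
        simpa using this.mul_const K
    have := ((hG z hz).add he)
    rw [add_zero] at this
    simp_rw [← hdecomp] at this
    exact this
  -- step bound
  have hstep : ∀ n, |a (n+1) - a n| ≤ c * ((d:ℝ)^(n+1))⁻¹ := by
    intro n
    have h1 : F^[n+1] z = F (F^[n] z) := Function.iterate_succ_apply' F n z
    have hfe : G₀ (F₀ (F^[n] z)) = (d : ℝ) * G₀ (F^[n] z) :=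
      green_funeq hd hnd₀ hG₀ (hwne n)
    have h2 : a (n+1) - a n
        = ((d : ℝ) ^ (n+1))⁻¹ * (G₀ (F (F^[n] z)) - G₀ (F₀ (F^[n] z))) := by
      rw [ha]
      simp only [h1, hfe, pow_succ]
      have hdne : ((d:ℝ)) ≠ 0 := by positivity
      have hdn : ((d:ℝ) ^ n) ≠ 0 := by positivity
      field_simp
    rw [h2, abs_mul, abs_inv, abs_pow, Nat.abs_cast, mul_comm]
    exact mul_le_mul_of_nonneg_right (hext _ (hwne n)) (by positivity)
  have := tele hd a (G z) c hc hstep halim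
  simpa [ha] using this
end
end

section
/- Let F : ℂ^{k+1} → ℂ^{k+1} be a nondegenerate homogeneous polynomial map of degree d. Then the Green function G_F is Hölder continuous on every compact subset of ℂ^{k+1} \ {0}: for every compact K ⊂ ℂ^{k+1} \ {0} there exist constants C > 0 and α ∈ (0,1) such that |G_F(z) − G_F(z')| ≤ C ‖z − z'‖^α for all z, z' ∈ K. -/
open Filter Topology

noncomputable section

lemma aux_eval_smul {n d : ℕ} {P : MvPolynomial (Fin n) ℂ} (h : P.IsHomogeneous d)
    (c : ℂ) (x : Fin n → ℂ) :
    MvPolynomial.eval (fun j => c * x j) P = c ^ d * MvPolynomial.eval x P := by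
  rw [MvPolynomial.eval_eq', MvPolynomial.eval_eq', Finset.mul_sum]
  apply Finset.sum_congr rfl
  intro m hm
  have hw := h (MvPolynomial.mem_support_iff.mp hm)
  have hdeg : ∑ i, m i = d := by
    rw [← hw]
    simp [Finsupp.weight_apply, Finsupp.sum_fintype]
  calc MvPolynomial.coeff m P * ∏ i, (c * x i) ^ m i
      = MvPolynomial.coeff m P * ((∏ i, c ^ m i) * ∏ i, x i ^ m i) := by
        rw [← Finset.prod_mul_distrib]; simp [mul_pow]
    _ = c ^ d * (MvPolynomial.coeff m P * ∏ i, x i ^ m i) := by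
        rw [Finset.prod_pow_eq_pow_sum]
        rw [hdeg]; ring

lemma aux_contDiff_eval {n : ℕ} (P : MvPolynomial (Fin n) ℂ) :
    ContDiff ℂ 1 (fun z : EuclideanSpace ℂ (Fin n) => MvPolynomial.eval (fun j => z j) P) := by
  induction P using MvPolynomial.induction_on with
  | C a => simpa using contDiff_const
  | add p q hp hq => simpa using hp.add hq
  | mul_X p i hp =>
      simp only [map_mul, MvPolynomial.eval_X]
      exact hp.mul ((EuclideanSpace.proj i : EuclideanSpace ℂ (Fin n) →L[ℂ] ℂ).contDiff)

lemma aux_contDiff_F {m : ℕ} (F : EuclideanSpace ℂ (Fin m) → EuclideanSpace ℂ (Fin m))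
    (hp : ∀ i : Fin m, ∃ P : MvPolynomial (Fin m) ℂ,
      ∀ z, F z i = MvPolynomial.eval (fun j => z j) P) :
    ContDiff ℝ 1 F := by
  have : ContDiff ℂ 1 F := by
    rw [contDiff_euclidean]
    intro i
    obtain ⟨P, hP⟩ := hp i
    simpa only [← hP] using aux_contDiff_eval P
  exact this.restrict_scalars ℝ

lemma aux_lipschitz {m : ℕ} (F : EuclideanSpace ℂ (Fin m) → EuclideanSpace ℂ (Fin m))
    (hF : ContDiff ℝ 1 F) :
    ∃ L : ℝ, 0 < L ∧ ∀ x ∈ Metric.closedBall (0 : EuclideanSpace ℂ (Fin m)) 1,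
      ∀ y ∈ Metric.closedBall (0 : EuclideanSpace ℂ (Fin m)) 1, ‖F x - F y‖ ≤ L * ‖x - y‖ := by
  have hc : ContinuousOn (fun x => ‖fderiv ℝ F x‖) (Metric.closedBall 0 1) :=
    ((hF.continuous_fderiv one_ne_zero).norm).continuousOn
  obtain ⟨C, hC⟩ := (isCompact_closedBall (0 : EuclideanSpace ℂ (Fin m)) 1).exists_bound_of_continuousOn hc
  refine ⟨max C 1, lt_of_lt_of_le one_pos (le_max_right _ _), fun x hx y hy => ?_⟩
  have := Convex.norm_image_sub_le_of_norm_fderiv_le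
    (fun z (hz : z ∈ Metric.closedBall (0 : EuclideanSpace ℂ (Fin m)) 1) =>
      hF.differentiable one_ne_zero z)
    (fun z hz => le_trans (le_trans (le_abs_self _)
      ((Real.norm_eq_abs _) ▸ hC z hz)) (le_max_left C 1))
    (convex_closedBall _ _) hy hx
  simpa using this

lemma aux_log_lip {a b m : ℝ} (hm : 0 < m) (ha : m ≤ a) (hb : m ≤ b) :
    |Real.log a - Real.log b| ≤ |a - b| / m := by
  have key : ∀ x y : ℝ, m ≤ x → m ≤ y → y ≤ x →
      Real.log x - Real.log y ≤ (x - y) / m := by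
    intro x y hx hy hyx
    have hy0 : 0 < y := lt_of_lt_of_le hm hy
    have hx0 : 0 < x := lt_of_lt_of_le hm hx
    have h1 : Real.log x - Real.log y = Real.log (x / y) :=
      (Real.log_div (ne_of_gt hx0) (ne_of_gt hy0)).symm
    rw [h1]
    have h2 : Real.log (x / y) ≤ x / y - 1 :=
      Real.log_le_sub_one_of_pos (div_pos hx0 hy0)
    have h3 : x / y - 1 = (x - y) / y := by field_simp
    have h4 : (x - y) / y ≤ (x - y) / m :=
      div_le_div_of_nonneg_left (by linarith) hm hy
    linarith
  rcases le_total b a with h | h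
  · rw [abs_of_nonneg (by
      have := Real.log_le_log (lt_of_lt_of_le hm hb) h; linarith),
      abs_of_nonneg (by linarith)]
    exact key a b ha hb h
  · rw [abs_sub_comm, abs_sub_comm a b, abs_of_nonneg (by
      have := Real.log_le_log (lt_of_lt_of_le hm ha) h; linarith),
      abs_of_nonneg (by linarith)]
    exact key b a hb ha h

lemma aux_normalize_lip {E : Type*} [NormedAddCommGroup E] [NormedSpace ℂ E]
    (a b : E) (m : ℝ) (hm : 0 < m) (ha : m ≤ ‖a‖) (hb : m ≤ ‖b‖) :
    ‖((‖a‖ : ℂ))⁻¹ • a - ((‖b‖ : ℂ))⁻¹ • b‖ ≤ 2 / m * ‖a - b‖ := by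
  have ha0 : (0:ℝ) < ‖a‖ := lt_of_lt_of_le hm ha
  have hb0 : (0:ℝ) < ‖b‖ := lt_of_lt_of_le hm hb
  have key : ((‖a‖ : ℂ))⁻¹ • a - ((‖b‖ : ℂ))⁻¹ • b
      = ((‖a‖ : ℂ))⁻¹ • (a - b) + (((‖a‖ : ℂ))⁻¹ - ((‖b‖ : ℂ))⁻¹) • b := by
    rw [smul_sub, sub_smul]; abel
  rw [key]
  have h1 : ‖((‖a‖ : ℂ))⁻¹ • (a - b)‖ ≤ (1/m) * ‖a - b‖ := by
    rw [norm_smul]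
    gcongr
    rw [norm_inv, Complex.norm_real, Real.norm_eq_abs, abs_of_pos ha0]
    rw [one_div]
    exact inv_anti₀ hm ha
  have h2 : ‖(((‖a‖ : ℂ))⁻¹ - ((‖b‖ : ℂ))⁻¹) • b‖ ≤ (1/m) * ‖a - b‖ := by
    rw [norm_smul]
    have : ((‖a‖ : ℂ))⁻¹ - ((‖b‖ : ℂ))⁻¹ = (((‖a‖⁻¹ - ‖b‖⁻¹ : ℝ)) : ℂ) := by
      push_cast; ring
    rw [this, Complex.norm_real, Real.norm_eq_abs]
    have h3 : |‖a‖⁻¹ - ‖b‖⁻¹| = |‖b‖ - ‖a‖| / (‖a‖ * ‖b‖) := by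
      rw [inv_sub_inv (ne_of_gt ha0) (ne_of_gt hb0)]
      rw [abs_div, abs_of_pos (mul_pos ha0 hb0)]
    rw [h3]
    have h4 : |‖b‖ - ‖a‖| ≤ ‖a - b‖ := by
      rw [abs_sub_comm]
      exact (abs_norm_sub_norm_le a b)
    calc |‖b‖ - ‖a‖| / (‖a‖ * ‖b‖) * ‖b‖ = |‖b‖ - ‖a‖| / ‖a‖ := by
          field_simp
      _ ≤ ‖a - b‖ / m := div_le_div₀ (norm_nonneg _) h4 hm ha
      _ = (1/m) * ‖a - b‖ := by ring
  calc ‖((‖a‖ : ℂ))⁻¹ • (a - b) + (((‖a‖ : ℂ))⁻¹ - ((‖b‖ : ℂ))⁻¹) • b‖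
      ≤ ‖((‖a‖ : ℂ))⁻¹ • (a - b)‖ + ‖(((‖a‖ : ℂ))⁻¹ - ((‖b‖ : ℂ))⁻¹) • b‖ := norm_add_le _ _
    _ ≤ (1/m) * ‖a - b‖ + (1/m) * ‖a - b‖ := add_le_add h1 h2
    _ = 2 / m * ‖a - b‖ := by ring

lemma aux_geom {d : ℕ} (hd : 2 ≤ d) (n q : ℕ) :
    ∑ j ∈ Finset.range q, (((d:ℝ)) ^ (n + j + 1))⁻¹ ≤ ((d:ℝ) ^ n)⁻¹ := by
  have hd1 : (1:ℝ) < d := by exact_mod_cast lt_of_lt_of_le one_lt_two hd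
  have hd0 : (0:ℝ) < d := lt_trans one_pos hd1
  have h1 : ∀ j, (((d:ℝ)) ^ (n + j + 1))⁻¹ = ((d:ℝ)^(n+1))⁻¹ * ((d:ℝ)⁻¹)^j := by
    intro j
    rw [show n + j + 1 = (n + 1) + j by ring, pow_add, mul_inv, inv_pow]
  simp_rw [h1, ← Finset.mul_sum]
  have h2 : ∑ j ∈ Finset.range q, ((d:ℝ)⁻¹)^j ≤ 2 := by
    have hlt : (d:ℝ)⁻¹ < 1 := inv_lt_one_of_one_lt₀ hd1
    have hle : (d:ℝ)⁻¹ ≤ 2⁻¹ := by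
      apply inv_anti₀ two_pos
      exact_mod_cast hd
    calc ∑ j ∈ Finset.range q, ((d:ℝ)⁻¹)^j
        ≤ ∑' j : ℕ, ((d:ℝ)⁻¹)^j := by
          apply Summable.sum_le_tsum
          · intro i _; positivity
          · exact summable_geometric_of_lt_one (by positivity) hlt
      _ = (1 - (d:ℝ)⁻¹)⁻¹ := tsum_geometric_of_lt_one (by positivity) hlt
      _ ≤ 2 := by
          rw [show (2:ℝ) = (2⁻¹)⁻¹ by norm_num]
          apply inv_anti₀ (by norm_num)
          linarith
  calc ((d:ℝ)^(n+1))⁻¹ * ∑ j ∈ Finset.range q, ((d:ℝ)⁻¹)^j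
      ≤ ((d:ℝ)^(n+1))⁻¹ * 2 := by
        apply mul_le_mul_of_nonneg_left h2 (by positivity)
    _ ≤ ((d:ℝ)^n)⁻¹ := by
        rw [pow_succ, mul_inv]
        have hinv : ((d:ℝ))⁻¹ ≤ 2⁻¹ := inv_anti₀ two_pos (by exact_mod_cast hd)
        have h0 : (0:ℝ) ≤ ((d:ℝ)^n)⁻¹ := by positivity
        nlinarith [h0, hinv]

lemma aux_geom2 {dr L : ℝ} (hd : 0 < dr) (hL : dr + 1 ≤ L) (n : ℕ) :
    ∑ j ∈ Finset.range n, (dr ^ (j+1))⁻¹ * L ^ j ≤ (dr ^ n)⁻¹ * L ^ n := by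
  induction n with
  | zero => simp
  | succ n ih =>
      rw [Finset.sum_range_succ]
      have hL0 : (0:ℝ) < L := by linarith
      have h1 : (dr ^ n)⁻¹ * L ^ n + (dr ^ (n+1))⁻¹ * L ^ n
          ≤ (dr ^ (n+1))⁻¹ * L ^ (n+1) := by
        have he : (dr ^ n)⁻¹ = (dr ^ (n+1))⁻¹ * dr := by
          rw [pow_succ, mul_inv]
          field_simp
        have h2 : (0:ℝ) ≤ (dr ^ (n+1))⁻¹ * L ^ n := by positivity
        have h3 : (dr^(n+1))⁻¹ * L ^ n * (dr+1) ≤ (dr^(n+1))⁻¹ * L ^ n * L :=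
          mul_le_mul_of_nonneg_left hL h2
        rw [he, pow_succ L n]
        nlinarith [h3]
      calc ∑ j ∈ Finset.range n, (dr ^ (j+1))⁻¹ * L ^ j + (dr ^ (n+1))⁻¹ * L ^ n
          ≤ (dr ^ n)⁻¹ * L ^ n + (dr ^ (n+1))⁻¹ * L ^ n := by linarith
        _ ≤ (dr ^ (n+1))⁻¹ * L ^ (n+1) := h1



set_option maxHeartbeats 1000000 in
theorem stmt10 (k d : ℕ) (hk : 1 ≤ k) (hd : 2 ≤ d)
    (F : EuclideanSpace ℂ (Fin (k + 1)) → EuclideanSpace ℂ (Fin (k + 1)))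
    (hpoly : IsHomPoly k d F) (hnd : IsNondeg k F)
    (G : EuclideanSpace ℂ (Fin (k + 1)) → ℝ) (hG : IsGreen k d F G) :
    ∀ K : Set (EuclideanSpace ℂ (Fin (k + 1))), K ⊆ {z | z ≠ 0} → IsCompact K →
      ∃ C > (0 : ℝ), ∃ α ∈ Set.Ioo (0 : ℝ) 1, ∀ z ∈ K, ∀ z' ∈ K,
        |G z - G z'| ≤ C * ‖z - z'‖ ^ α := by
  intro K hK hKc
  rcases K.eq_empty_or_nonempty with hKe | hKne
  · exact ⟨1, one_pos, 1/2, ⟨by norm_num, by norm_num⟩, by simp [hKe]⟩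
  have hd1 : (1:ℝ) < (d:ℝ) := by exact_mod_cast lt_of_lt_of_le one_lt_two hd
  have hd0 : (0:ℝ) < (d:ℝ) := lt_trans one_pos hd1
  -- smoothness and basic Lipschitz bound
  have hF1 : ContDiff ℝ 1 F :=
    aux_contDiff_F F (fun i => (hpoly i).imp (fun P hP => hP.2))
  have hFc : Continuous F := hF1.continuous
  -- homogeneity
  have hsmul : ∀ (c : ℂ) (z), F (c • z) = c ^ d • F z := by
    intro c z
    ext i
    obtain ⟨P, hPh, hPe⟩ := hpoly i
    have h1 : F (c • z) i = MvPolynomial.eval (fun j => c * z j) P := by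
      rw [hPe]
      congr 1
    rw [h1, aux_eval_smul hPh, ← hPe]
    rfl
  have hiter : ∀ (c : ℂ) (z) (n : ℕ), F^[n] (c • z) = c ^ (d ^ n) • F^[n] z := by
    intro c z n
    induction n generalizing c z with
    | zero => simp
    | succ n ih =>
        rw [Function.iterate_succ_apply, Function.iterate_succ_apply, hsmul, ih,
          ← pow_mul, ← pow_succ']
  -- the unit sphere
  have hScomp : IsCompact (Metric.sphere (0 : EuclideanSpace ℂ (Fin (k+1))) 1) :=
    isCompact_sphere 0 1
  have hSne : (Metric.sphere (0 : EuclideanSpace ℂ (Fin (k+1))) 1).Nonempty :=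
    NormedSpace.sphere_nonempty.mpr zero_le_one
  have hnormS : ∀ z ∈ Metric.sphere (0 : EuclideanSpace ℂ (Fin (k+1))) 1, ‖z‖ = 1 := by
    intro z hz; simpa using mem_sphere_zero_iff_norm.mp hz
  have hS0 : ∀ z ∈ Metric.sphere (0 : EuclideanSpace ℂ (Fin (k+1))) 1, z ≠ 0 := by
    intro z hz h0
    rw [h0] at hz
    simpa using hnormS 0 hz
  obtain ⟨zm, hzmS, hzm'⟩ := hScomp.exists_isMinOn hSne hFc.norm.continuousOn
  obtain ⟨zM, hzMS, hzM'⟩ := hScomp.exists_isMaxOn hSne hFc.norm.continuousOn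
  have hzm := isMinOn_iff.mp hzm'
  have hzM := isMaxOn_iff.mp hzM'
  set m : ℝ := ‖F zm‖ with hmdef
  set M : ℝ := ‖F zM‖ with hMdef
  have hm0 : 0 < m := by
    rw [hmdef, norm_pos_iff]
    intro h
    exact hS0 zm hzmS (hnd _ h)
  have hFlb : ∀ z ∈ Metric.sphere (0 : EuclideanSpace ℂ (Fin (k+1))) 1, m ≤ ‖F z‖ := hzm
  have hFub : ∀ z ∈ Metric.sphere (0 : EuclideanSpace ℂ (Fin (k+1))) 1, ‖F z‖ ≤ M := hzM
  obtain ⟨L0, hL00, hL0⟩ := aux_lipschitz F hF1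
  have hL0S : ∀ x ∈ Metric.sphere (0 : EuclideanSpace ℂ (Fin (k+1))) 1,
      ∀ y ∈ Metric.sphere (0 : EuclideanSpace ℂ (Fin (k+1))) 1,
      ‖F x - F y‖ ≤ L0 * ‖x - y‖ := fun x hx y hy =>
    hL0 x (Metric.sphere_subset_closedBall hx) y (Metric.sphere_subset_closedBall hy)
  -- the normalized map on the sphere
  set f : EuclideanSpace ℂ (Fin (k+1)) → EuclideanSpace ℂ (Fin (k+1)) :=
    fun z => ((‖F z‖ : ℂ))⁻¹ • F z with hfdef
  have hFS0 : ∀ z ∈ Metric.sphere (0 : EuclideanSpace ℂ (Fin (k+1))) 1, F z ≠ 0 := by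
    intro z hz h0
    exact hS0 z hz (hnd _ h0)
  have hfS : ∀ z ∈ Metric.sphere (0 : EuclideanSpace ℂ (Fin (k+1))) 1,
      f z ∈ Metric.sphere (0 : EuclideanSpace ℂ (Fin (k+1))) 1 := by
    intro z hz
    rw [mem_sphere_zero_iff_norm, hfdef]
    have h1 : ‖F z‖ ≠ 0 := norm_ne_zero_iff.mpr (hFS0 z hz)
    rw [norm_smul, norm_inv, Complex.norm_real, Real.norm_eq_abs,
      abs_of_nonneg (norm_nonneg _)]
    field_simp
  have hfSn : ∀ z ∈ Metric.sphere (0 : EuclideanSpace ℂ (Fin (k+1))) 1, ∀ n : ℕ,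
      f^[n] z ∈ Metric.sphere (0 : EuclideanSpace ℂ (Fin (k+1))) 1 := by
    intro z hz n
    induction n with
    | zero => simpa using hz
    | succ n ih => rw [Function.iterate_succ_apply']; exact hfS _ ih
  -- key structure of iterates on the sphere
  have hkey : ∀ z ∈ Metric.sphere (0 : EuclideanSpace ℂ (Fin (k+1))) 1, ∀ n : ℕ,
      0 < ‖F^[n] z‖ ∧ F^[n] z = ((‖F^[n] z‖ : ℝ) : ℂ) • f^[n] z := by
    intro z hz n
    induction n with
    | zero =>
        constructor
        · simpa [hnormS z hz] using one_pos
        · simp [hnormS z hz]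
    | succ n ih =>
        obtain ⟨hr0, heq⟩ := ih
        have hgS := hfSn z hz n
        have hFg0 : F (f^[n] z) ≠ 0 := hFS0 _ hgS
        have hFgn : (0:ℝ) < ‖F (f^[n] z)‖ := norm_pos_iff.mpr hFg0
        have hstep : F^[n+1] z = ((‖F^[n] z‖ : ℂ)) ^ d • F (f^[n] z) := by
          rw [Function.iterate_succ_apply']
          conv_lhs => rw [heq]
          rw [hsmul]
        have hnrm : ‖F^[n+1] z‖ = ‖F^[n] z‖ ^ d * ‖F (f^[n] z)‖ := by
          rw [hstep, norm_smul, norm_pow, Complex.norm_real, Real.norm_eq_abs,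
            abs_of_pos hr0]
        constructor
        · rw [hnrm]; positivity
        · have h2 : f^[n+1] z = f (f^[n] z) := Function.iterate_succ_apply' f n z
          have h3 : f (f^[n] z) = ((‖F (f^[n] z)‖ : ℂ))⁻¹ • F (f^[n] z) := rfl
          rw [hstep, h2, h3, norm_smul, norm_pow, Complex.norm_real, Real.norm_eq_abs,
            abs_of_pos hr0, smul_smul]
          congr 1
          have hc : ((‖F (f^[n] z)‖ : ℝ) : ℂ) ≠ 0 := by
            exact_mod_cast ne_of_gt hFgn
          push_cast
          field_simp
  have hrec : ∀ z ∈ Metric.sphere (0 : EuclideanSpace ℂ (Fin (k+1))) 1, ∀ n : ℕ,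
      ((d:ℝ)^(n+1))⁻¹ * Real.log ‖F^[n+1] z‖
        = ((d:ℝ)^n)⁻¹ * Real.log ‖F^[n] z‖
          + ((d:ℝ)^(n+1))⁻¹ * Real.log ‖F (f^[n] z)‖ := by
    intro z hz n
    obtain ⟨hr0, heq⟩ := hkey z hz n
    have hgS := hfSn z hz n
    have hFgn : (0:ℝ) < ‖F (f^[n] z)‖ := norm_pos_iff.mpr (hFS0 _ hgS)
    have hnrm : ‖F^[n+1] z‖ = ‖F^[n] z‖ ^ d * ‖F (f^[n] z)‖ := by
      rw [Function.iterate_succ_apply']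
      conv_lhs => rw [heq]
      rw [hsmul, norm_smul, norm_pow, Complex.norm_real, Real.norm_eq_abs,
        abs_of_pos hr0]
    rw [hnrm, Real.log_mul (by positivity) (by positivity), Real.log_pow]
    field_simp
    ring
  -- bound on the potential and sums
  set B : ℝ := max |Real.log m| |Real.log M| with hBdef
  have hB0 : 0 ≤ B := le_trans (abs_nonneg _) (le_max_left _ _)
  have huB : ∀ w ∈ Metric.sphere (0 : EuclideanSpace ℂ (Fin (k+1))) 1,
      |Real.log ‖F w‖| ≤ B := by
    intro w hw
    have h1 : Real.log m ≤ Real.log ‖F w‖ := Real.log_le_log hm0 (hFlb w hw)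
    have h2 : Real.log ‖F w‖ ≤ Real.log M :=
      Real.log_le_log (norm_pos_iff.mpr (hFS0 w hw)) (hFub w hw)
    rw [abs_le]
    constructor
    · calc -B ≤ -|Real.log m| := neg_le_neg (le_max_left _ _)
        _ ≤ Real.log m := neg_abs_le _
        _ ≤ _ := h1
    · calc Real.log ‖F w‖ ≤ Real.log M := h2
        _ ≤ |Real.log M| := le_abs_self _
        _ ≤ B := le_max_right _ _
  have hsum : ∀ z ∈ Metric.sphere (0 : EuclideanSpace ℂ (Fin (k+1))) 1, ∀ n : ℕ,
      ((d:ℝ)^n)⁻¹ * Real.log ‖F^[n] z‖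
        = ∑ j ∈ Finset.range n, ((d:ℝ)^(j+1))⁻¹ * Real.log ‖F (f^[j] z)‖ := by
    intro z hz n
    induction n with
    | zero => simp [hnormS z hz]
    | succ n ih => rw [hrec z hz n, ih, Finset.sum_range_succ]
  have hcauchy : ∀ z ∈ Metric.sphere (0 : EuclideanSpace ℂ (Fin (k+1))) 1, ∀ n p : ℕ,
      |((d:ℝ)^(n+p))⁻¹ * Real.log ‖F^[n+p] z‖ - ((d:ℝ)^n)⁻¹ * Real.log ‖F^[n] z‖|
        ≤ B * ((d:ℝ)^n)⁻¹ := by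
    intro z hz n p
    rw [hsum z hz, hsum z hz]
    rw [← Finset.sum_Ico_eq_sub _ (Nat.le_add_right n p)]
    calc |∑ j ∈ Finset.Ico n (n+p), ((d:ℝ)^(j+1))⁻¹ * Real.log ‖F (f^[j] z)‖|
        ≤ ∑ j ∈ Finset.Ico n (n+p), |((d:ℝ)^(j+1))⁻¹ * Real.log ‖F (f^[j] z)‖| :=
          Finset.abs_sum_le_sum_abs _ _
      _ ≤ ∑ j ∈ Finset.Ico n (n+p), B * ((d:ℝ)^(j+1))⁻¹ := by
          apply Finset.sum_le_sum
          intro j _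
          rw [abs_mul, abs_of_pos (by positivity : (0:ℝ) < ((d:ℝ)^(j+1))⁻¹)]
          rw [mul_comm B _]
          apply mul_le_mul_of_nonneg_left (huB _ (hfSn z hz j)) (by positivity)
      _ = B * ∑ j ∈ Finset.range p, ((d:ℝ)^(n+j+1))⁻¹ := by
          rw [Finset.sum_Ico_eq_sum_range, ← Finset.mul_sum]
          simp
      _ ≤ B * ((d:ℝ)^n)⁻¹ := mul_le_mul_of_nonneg_left (aux_geom hd n p) hB0
  have hGA : ∀ z ∈ Metric.sphere (0 : EuclideanSpace ℂ (Fin (k+1))) 1, ∀ n : ℕ,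
      |G z - ((d:ℝ)^n)⁻¹ * Real.log ‖F^[n] z‖| ≤ B * ((d:ℝ)^n)⁻¹ := by
    intro z hz n
    have hgz := hG z (hS0 z hz)
    have h1 : Tendsto (fun p : ℕ => ((d:ℝ)^(n+p))⁻¹ * Real.log ‖F^[n+p] z‖) atTop
        (nhds (G z)) := by
      have h2 := hgz.comp (tendsto_add_atTop_nat n)
      convert h2 using 2 with p
      simp [Function.comp, add_comm]
    have h3 : Tendsto (fun p : ℕ =>
        |((d:ℝ)^(n+p))⁻¹ * Real.log ‖F^[n+p] z‖ - ((d:ℝ)^n)⁻¹ * Real.log ‖F^[n] z‖|)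
        atTop (nhds |G z - ((d:ℝ)^n)⁻¹ * Real.log ‖F^[n] z‖|) :=
      (h1.sub tendsto_const_nhds).abs
    exact le_of_tendsto h3 (Eventually.of_forall (fun p => hcauchy z hz n p))
  have hGB : ∀ z ∈ Metric.sphere (0 : EuclideanSpace ℂ (Fin (k+1))) 1, |G z| ≤ B := by
    intro z hz
    have := hGA z hz 0
    simpa [hnormS z hz] using this
  -- Lipschitz estimates
  have huLip : ∀ x ∈ Metric.sphere (0 : EuclideanSpace ℂ (Fin (k+1))) 1,
      ∀ y ∈ Metric.sphere (0 : EuclideanSpace ℂ (Fin (k+1))) 1,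
      |Real.log ‖F x‖ - Real.log ‖F y‖| ≤ L0/m * ‖x - y‖ := by
    intro x hx y hy
    calc |Real.log ‖F x‖ - Real.log ‖F y‖| ≤ |‖F x‖ - ‖F y‖| / m :=
          aux_log_lip hm0 (hFlb x hx) (hFlb y hy)
      _ ≤ ‖F x - F y‖ / m :=
          div_le_div_of_nonneg_right (abs_norm_sub_norm_le _ _) hm0.le
      _ ≤ (L0 * ‖x - y‖) / m :=
          div_le_div_of_nonneg_right (hL0S x hx y hy) hm0.le
      _ = L0/m * ‖x - y‖ := by ring
  set Lf : ℝ := 2/m*L0 with hLfdef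
  have hLf0 : 0 < Lf := by positivity
  have hfLip : ∀ x ∈ Metric.sphere (0 : EuclideanSpace ℂ (Fin (k+1))) 1,
      ∀ y ∈ Metric.sphere (0 : EuclideanSpace ℂ (Fin (k+1))) 1,
      ‖f x - f y‖ ≤ Lf * ‖x - y‖ := by
    intro x hx y hy
    calc ‖f x - f y‖ ≤ 2/m * ‖F x - F y‖ :=
          aux_normalize_lip (F x) (F y) m hm0 (hFlb x hx) (hFlb y hy)
      _ ≤ 2/m * (L0 * ‖x - y‖) :=
          mul_le_mul_of_nonneg_left (hL0S x hx y hy) (by positivity)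
      _ = Lf * ‖x - y‖ := by rw [hLfdef]; ring
  have hfLipn : ∀ n : ℕ, ∀ x ∈ Metric.sphere (0 : EuclideanSpace ℂ (Fin (k+1))) 1,
      ∀ y ∈ Metric.sphere (0 : EuclideanSpace ℂ (Fin (k+1))) 1,
      ‖f^[n] x - f^[n] y‖ ≤ Lf^n * ‖x - y‖ := by
    intro n
    induction n with
    | zero => intro x _ y _; simp
    | succ n ih =>
        intro x hx y hy
        rw [Function.iterate_succ_apply', Function.iterate_succ_apply']
        calc ‖f (f^[n] x) - f (f^[n] y)‖ ≤ Lf * ‖f^[n] x - f^[n] y‖ :=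
              hfLip _ (hfSn x hx n) _ (hfSn y hy n)
          _ ≤ Lf * (Lf^n * ‖x - y‖) :=
              mul_le_mul_of_nonneg_left (ih x hx y hy) (le_of_lt hLf0)
          _ = Lf^(n+1) * ‖x - y‖ := by ring
  -- Hoelder on the sphere
  set L : ℝ := max Lf (d:ℝ) + 1 with hLdef
  have hLd1 : (d:ℝ) + 1 ≤ L := add_le_add_left (le_max_right _ _) 1
  have hLfL : Lf ≤ L := le_trans (le_max_left _ _) (by linarith [le_refl (max Lf (d:ℝ))])
  have hL1 : 1 < L := by
    have := le_max_right Lf (d:ℝ)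
    linarith
  have hLpos : 0 < L := lt_trans one_pos hL1
  have hAdiff : ∀ n : ℕ, ∀ x ∈ Metric.sphere (0 : EuclideanSpace ℂ (Fin (k+1))) 1,
      ∀ y ∈ Metric.sphere (0 : EuclideanSpace ℂ (Fin (k+1))) 1,
      |((d:ℝ)^n)⁻¹ * Real.log ‖F^[n] x‖ - ((d:ℝ)^n)⁻¹ * Real.log ‖F^[n] y‖|
        ≤ (L0/m) * (((d:ℝ)^n)⁻¹ * L^n) * ‖x - y‖ := by
    intro n x hx y hy
    rw [hsum x hx n, hsum y hy n, ← Finset.sum_sub_distrib]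
    calc |∑ j ∈ Finset.range n, (((d:ℝ)^(j+1))⁻¹ * Real.log ‖F (f^[j] x)‖
            - ((d:ℝ)^(j+1))⁻¹ * Real.log ‖F (f^[j] y)‖)|
        ≤ ∑ j ∈ Finset.range n, |((d:ℝ)^(j+1))⁻¹ * Real.log ‖F (f^[j] x)‖
            - ((d:ℝ)^(j+1))⁻¹ * Real.log ‖F (f^[j] y)‖| := Finset.abs_sum_le_sum_abs _ _
      _ ≤ ∑ j ∈ Finset.range n, ((d:ℝ)^(j+1))⁻¹ * L^j * ((L0/m) * ‖x - y‖) := by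
          apply Finset.sum_le_sum
          intro j _
          rw [← mul_sub, abs_mul, abs_of_pos (by positivity : (0:ℝ) < ((d:ℝ)^(j+1))⁻¹)]
          have h1 : |Real.log ‖F (f^[j] x)‖ - Real.log ‖F (f^[j] y)‖|
              ≤ L0/m * ‖f^[j] x - f^[j] y‖ := huLip _ (hfSn x hx j) _ (hfSn y hy j)
          have h2 : ‖f^[j] x - f^[j] y‖ ≤ Lf^j * ‖x - y‖ := hfLipn j x hx y hy
          have h3 : Lf^j ≤ L^j := pow_le_pow_left₀ hLf0.le hLfL j
          have h4 : |Real.log ‖F (f^[j] x)‖ - Real.log ‖F (f^[j] y)‖|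
              ≤ L^j * ((L0/m) * ‖x - y‖) := by
            calc |Real.log ‖F (f^[j] x)‖ - Real.log ‖F (f^[j] y)‖|
                ≤ L0/m * (Lf^j * ‖x - y‖) := le_trans h1
                  (mul_le_mul_of_nonneg_left h2 (by positivity))
              _ ≤ L0/m * (L^j * ‖x - y‖) := by
                  apply mul_le_mul_of_nonneg_left _ (by positivity)
                  exact mul_le_mul_of_nonneg_right h3 (norm_nonneg _)
              _ = L^j * ((L0/m) * ‖x - y‖) := by ring
          calc ((d:ℝ)^(j+1))⁻¹ * |Real.log ‖F (f^[j] x)‖ - Real.log ‖F (f^[j] y)‖|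
              ≤ ((d:ℝ)^(j+1))⁻¹ * (L^j * ((L0/m) * ‖x - y‖)) :=
                mul_le_mul_of_nonneg_left h4 (by positivity)
            _ = ((d:ℝ)^(j+1))⁻¹ * L^j * ((L0/m) * ‖x - y‖) := by ring
      _ = (∑ j ∈ Finset.range n, ((d:ℝ)^(j+1))⁻¹ * L^j) * ((L0/m) * ‖x - y‖) := by
          rw [Finset.sum_mul]
      _ ≤ ((d:ℝ)^n)⁻¹ * L^n * ((L0/m) * ‖x - y‖) :=
          mul_le_mul_of_nonneg_right (aux_geom2 hd0 hLd1 n) (by positivity)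
      _ = (L0/m) * (((d:ℝ)^n)⁻¹ * L^n) * ‖x - y‖ := by ring
  -- exponent
  have hlogd : 0 < Real.log d := Real.log_pos hd1
  have hlogL : 0 < Real.log L := Real.log_pos hL1
  have hdL : Real.log d < Real.log L := Real.log_lt_log hd0 (by linarith)
  set α : ℝ := Real.log d / Real.log L with hαdef
  have hα : α ∈ Set.Ioo (0:ℝ) 1 :=
    ⟨div_pos hlogd hlogL, (div_lt_one hlogL).mpr hdL⟩
  set Cs : ℝ := (2*B + L0/m) * d + (2*B + 2*(L0/m)) + 1 with hCsdef
  have hCs1 : 0 ≤ (2*B + L0/m) * d := by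
    apply mul_nonneg _ hd0.le
    have := div_pos hL00 hm0
    linarith
  have hCs0 : 0 < Cs := by
    have := div_pos hL00 hm0
    rw [hCsdef]
    nlinarith
  have hSH : ∀ x ∈ Metric.sphere (0 : EuclideanSpace ℂ (Fin (k+1))) 1,
      ∀ y ∈ Metric.sphere (0 : EuclideanSpace ℂ (Fin (k+1))) 1,
      |G x - G y| ≤ Cs * ‖x - y‖ ^ α := by
    intro x hx y hy
    by_cases hxy : x = y
    · subst hxy
      simp only [sub_self, abs_zero, norm_zero]
      rw [Real.zero_rpow (ne_of_gt hα.1), mul_zero]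
    have hδ0 : (0:ℝ) < ‖x - y‖ := norm_pos_iff.mpr (sub_ne_zero.mpr hxy)
    have hδα : (0:ℝ) < ‖x - y‖ ^ α := Real.rpow_pos_of_pos hδ0 α
    have master : ∀ n : ℕ, |G x - G y| ≤ 2*B*((d:ℝ)^n)⁻¹
        + (L0/m) * (((d:ℝ)^n)⁻¹ * L^n) * ‖x - y‖ := by
      intro n
      have t1 := hGA x hx n
      have t2 := hGA y hy n
      have t3 := hAdiff n x hx y hy
      have t2' : |((d:ℝ)^n)⁻¹ * Real.log ‖F^[n] y‖ - G y| ≤ B * ((d:ℝ)^n)⁻¹ := by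
        rw [abs_sub_comm]; exact t2
      have tri1 : |G x - G y| ≤ |G x - ((d:ℝ)^n)⁻¹ * Real.log ‖F^[n] y‖|
          + |((d:ℝ)^n)⁻¹ * Real.log ‖F^[n] y‖ - G y| := abs_sub_le _ _ _
      have tri2 : |G x - ((d:ℝ)^n)⁻¹ * Real.log ‖F^[n] y‖|
          ≤ |G x - ((d:ℝ)^n)⁻¹ * Real.log ‖F^[n] x‖|
            + |((d:ℝ)^n)⁻¹ * Real.log ‖F^[n] x‖ - ((d:ℝ)^n)⁻¹ * Real.log ‖F^[n] y‖| :=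
        abs_sub_le _ _ _
      linarith
    rcases le_or_gt 1 ‖x - y‖ with hδ1 | hδ1
    · have hδ2 : ‖x - y‖ ≤ 2 := by
        calc ‖x - y‖ ≤ ‖x‖ + ‖y‖ := norm_sub_le _ _
          _ = 2 := by rw [hnormS x hx, hnormS y hy]; norm_num
      have h0 := master 0
      simp only [pow_zero, inv_one, mul_one, one_mul] at h0
      have h1 : |G x - G y| ≤ 2*B + 2*(L0/m) := by
        have h2 : (L0/m) * ‖x - y‖ ≤ (L0/m) * 2 :=
          mul_le_mul_of_nonneg_left hδ2 (by positivity)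
        linarith
      have h3 : (1:ℝ) ≤ ‖x - y‖ ^ α := Real.one_le_rpow hδ1 hα.1.le
      calc |G x - G y| ≤ 2*B + 2*(L0/m) := h1
        _ ≤ Cs := by rw [hCsdef]; linarith
        _ = Cs * 1 := by ring
        _ ≤ Cs * ‖x - y‖ ^ α := mul_le_mul_of_nonneg_left h3 hCs0.le
    · -- small distance case
      set t : ℝ := Real.log (‖x - y‖)⁻¹ with htdef
      have ht0 : 0 < t := Real.log_pos ((one_lt_inv₀ hδ0).mpr hδ1)
      set n : ℕ := ⌊t / Real.log L⌋₊ with hndef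
      have hn1 : (n:ℝ) ≤ t / Real.log L := Nat.floor_le (by positivity)
      have hn2 : t / Real.log L < (n:ℝ) + 1 := Nat.lt_floor_add_one _
      have hLn : L^n ≤ (‖x - y‖)⁻¹ := by
        have h1 : (n:ℝ) * Real.log L ≤ t := (le_div_iff₀ hlogL).mp hn1
        calc L^n = Real.exp (Real.log L) ^ n := by rw [Real.exp_log hLpos]
          _ = Real.exp ((n:ℝ) * Real.log L) := (Real.exp_nat_mul _ n).symm
          _ ≤ Real.exp t := Real.exp_le_exp.mpr h1
          _ = (‖x - y‖)⁻¹ := Real.exp_log (by positivity)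
      have e1 : ‖x - y‖ ^ α = Real.exp (-(t * α)) := by
        rw [Real.rpow_def_of_pos hδ0]
        congr 1
        have h2 : Real.log ‖x - y‖ = -t := by
          rw [htdef, Real.log_inv]; ring
        rw [h2]; ring
      have e3 : Real.exp (t * α) ≤ (d:ℝ)^(n+1) := by
        have h4 : t * α ≤ ((n:ℝ)+1) * Real.log d := by
          have h5 : t / Real.log L ≤ (n:ℝ)+1 := hn2.le
          have h6 : (t / Real.log L) * Real.log d ≤ ((n:ℝ)+1) * Real.log d :=
            mul_le_mul_of_nonneg_right h5 hlogd.le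
          calc t * α = (t / Real.log L) * Real.log d := by rw [hαdef]; ring
            _ ≤ ((n:ℝ)+1) * Real.log d := h6
        calc Real.exp (t * α) ≤ Real.exp (((n:ℝ)+1) * Real.log d) :=
              Real.exp_le_exp.mpr h4
          _ = Real.exp (Real.log d) ^ (n+1) := by
              rw [← Real.exp_nat_mul]; norm_num
          _ = (d:ℝ)^(n+1) := by rw [Real.exp_log hd0]
      have hdn : ((d:ℝ)^n)⁻¹ ≤ d * ‖x - y‖ ^ α := by
        calc ((d:ℝ)^n)⁻¹ = d * ((d:ℝ)^(n+1))⁻¹ := by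
              rw [pow_succ, mul_inv]
              field_simp
          _ ≤ d * (Real.exp (t * α))⁻¹ :=
              mul_le_mul_of_nonneg_left (inv_anti₀ (Real.exp_pos _) e3) hd0.le
          _ = d * ‖x - y‖ ^ α := by
              rw [e1, ← Real.exp_neg]
      have hmid : (((d:ℝ)^n)⁻¹ * L^n) * ‖x - y‖ ≤ d * ‖x - y‖ ^ α := by
        calc (((d:ℝ)^n)⁻¹ * L^n) * ‖x - y‖
            ≤ (((d:ℝ)^n)⁻¹ * (‖x - y‖)⁻¹) * ‖x - y‖ := by
              apply mul_le_mul_of_nonneg_right _ hδ0.le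
              exact mul_le_mul_of_nonneg_left hLn (by positivity)
          _ = ((d:ℝ)^n)⁻¹ := by
              field_simp
          _ ≤ d * ‖x - y‖ ^ α := hdn
      have hfin := master n
      have h7 : 2*B*((d:ℝ)^n)⁻¹ ≤ 2*B*(d * ‖x - y‖ ^ α) :=
        mul_le_mul_of_nonneg_left hdn (by linarith)
      have h8 : (L0/m) * ((((d:ℝ)^n)⁻¹ * L^n) * ‖x - y‖) ≤ (L0/m) * (d * ‖x - y‖ ^ α) :=
        mul_le_mul_of_nonneg_left hmid (by positivity)
      calc |G x - G y| ≤ 2*B*((d:ℝ)^n)⁻¹ + (L0/m) * (((d:ℝ)^n)⁻¹ * L^n) * ‖x - y‖ := hfin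
        _ = 2*B*((d:ℝ)^n)⁻¹ + (L0/m) * ((((d:ℝ)^n)⁻¹ * L^n) * ‖x - y‖) := by ring
        _ ≤ 2*B*(d * ‖x - y‖ ^ α) + (L0/m) * (d * ‖x - y‖ ^ α) := by linarith
        _ = ((2*B + L0/m) * d) * ‖x - y‖ ^ α := by ring
        _ ≤ Cs * ‖x - y‖ ^ α := by
            apply mul_le_mul_of_nonneg_right _ hδα.le
            rw [hCsdef]
            have := div_pos hL00 hm0
            linarith
  -- reduction from K to the sphere
  obtain ⟨zr, hzrK, hzr'⟩ := hKc.exists_isMinOn hKne continuous_norm.continuousOn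
  obtain ⟨zR, hzRK, hzR'⟩ := hKc.exists_isMaxOn hKne continuous_norm.continuousOn
  have hrK := isMinOn_iff.mp hzr'
  have hRK := isMaxOn_iff.mp hzR'
  set r : ℝ := ‖zr‖ with hrdef
  set R : ℝ := ‖zR‖ with hRdef
  have hr0 : 0 < r := norm_pos_iff.mpr (hK hzrK)
  have hπS : ∀ z ∈ K, ((‖z‖ : ℂ))⁻¹ • z ∈
      Metric.sphere (0 : EuclideanSpace ℂ (Fin (k+1))) 1 := by
    intro z hz
    have hzn : ‖z‖ ≠ 0 := ne_of_gt (lt_of_lt_of_le hr0 (hrK z hz))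
    rw [mem_sphere_zero_iff_norm, norm_smul, norm_inv, Complex.norm_real,
      Real.norm_eq_abs, abs_of_nonneg (norm_nonneg _)]
    field_simp
  have hGsplit : ∀ z ∈ K, G z = Real.log ‖z‖ + G (((‖z‖ : ℂ))⁻¹ • z) := by
    intro z hz
    have hz0 : z ≠ 0 := hK hz
    have hzn0 : (0:ℝ) < ‖z‖ := norm_pos_iff.mpr hz0
    have hπz := hπS z hz
    have h1 := hG z hz0
    have h2 := hG _ (hS0 _ hπz)
    have hzeq : ((‖z‖ : ℂ)) • (((‖z‖ : ℂ))⁻¹ • z) = z := by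
      rw [smul_smul, mul_inv_cancel₀ (by exact_mod_cast ne_of_gt hzn0), one_smul]
    have h3 : ∀ n : ℕ, ((d:ℝ)^n)⁻¹ * Real.log ‖F^[n] z‖
        = Real.log ‖z‖ + ((d:ℝ)^n)⁻¹ * Real.log ‖F^[n] (((‖z‖ : ℂ))⁻¹ • z)‖ := by
      intro n
      have h4 : F^[n] z = ((‖z‖ : ℂ))^(d^n) • F^[n] (((‖z‖ : ℂ))⁻¹ • z) := by
        conv_lhs => rw [← hzeq]
        rw [hiter]
      have h5 : 0 < ‖F^[n] (((‖z‖ : ℂ))⁻¹ • z)‖ := (hkey _ hπz n).1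
      rw [h4, norm_smul, norm_pow, Complex.norm_real, Real.norm_eq_abs,
        abs_of_pos hzn0, Real.log_mul (by positivity) (ne_of_gt h5), Real.log_pow]
      push_cast
      field_simp
    have h6 : Tendsto (fun n : ℕ => Real.log ‖z‖
        + ((d:ℝ)^n)⁻¹ * Real.log ‖F^[n] (((‖z‖ : ℂ))⁻¹ • z)‖) atTop
        (nhds (Real.log ‖z‖ + G (((‖z‖ : ℂ))⁻¹ • z))) := tendsto_const_nhds.add h2
    have h7 : Tendsto (fun n : ℕ => ((d:ℝ)^n)⁻¹ * Real.log ‖F^[n] z‖) atTop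
        (nhds (Real.log ‖z‖ + G (((‖z‖ : ℂ))⁻¹ • z))) :=
      h6.congr (fun n => (h3 n).symm)
    exact tendsto_nhds_unique h1 h7
  set Cf : ℝ := Cs * max 1 (2/r) + max 1 (2*R)/r + 1 with hCfdef
  have hCf0 : 0 < Cf := by
    have h1 : 0 < Cs * max 1 (2/r) :=
      mul_pos hCs0 (lt_of_lt_of_le one_pos (le_max_left _ _))
    have h2 : 0 ≤ max 1 (2*R)/r :=
      div_nonneg (le_trans zero_le_one (le_max_left _ _)) hr0.le
    rw [hCfdef]
    linarith
  refine ⟨Cf, hCf0, α, hα, ?_⟩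
  intro z hz z' hz'
  by_cases hzz : z = z'
  · subst hzz
    simp only [sub_self, abs_zero, norm_zero]
    rw [Real.zero_rpow (ne_of_gt hα.1), mul_zero]
  have hδ0 : (0:ℝ) < ‖z - z'‖ := norm_pos_iff.mpr (sub_ne_zero.mpr hzz)
  have hδα : (0:ℝ) < ‖z - z'‖ ^ α := Real.rpow_pos_of_pos hδ0 α
  have h1 : |G z - G z'| ≤ |Real.log ‖z‖ - Real.log ‖z'‖|
      + |G (((‖z‖ : ℂ))⁻¹ • z) - G (((‖z'‖ : ℂ))⁻¹ • z')| := by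
    rw [hGsplit z hz, hGsplit z' hz']
    have e : Real.log ‖z‖ + G (((‖z‖ : ℂ))⁻¹ • z)
        - (Real.log ‖z'‖ + G (((‖z'‖ : ℂ))⁻¹ • z'))
        = (Real.log ‖z‖ - Real.log ‖z'‖)
          + (G (((‖z‖ : ℂ))⁻¹ • z) - G (((‖z'‖ : ℂ))⁻¹ • z')) := by ring
    rw [e]
    exact abs_add_le _ _
  have T1 : |Real.log ‖z‖ - Real.log ‖z'‖| ≤ ‖z - z'‖ / r := by
    calc |Real.log ‖z‖ - Real.log ‖z'‖| ≤ |‖z‖ - ‖z'‖| / r :=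
          aux_log_lip hr0 (hrK z hz) (hrK z' hz')
      _ ≤ ‖z - z'‖ / r :=
          div_le_div_of_nonneg_right (abs_norm_sub_norm_le _ _) hr0.le
  have hδR : ‖z - z'‖ ≤ max 1 (2*R) := by
    have : ‖z - z'‖ ≤ ‖z‖ + ‖z'‖ := norm_sub_le _ _
    have h2 := hRK z hz
    have h3 := hRK z' hz'
    calc ‖z - z'‖ ≤ 2*R := by linarith
      _ ≤ max 1 (2*R) := le_max_right _ _
  have hsplit : ‖z - z'‖ = ‖z - z'‖ ^ α * ‖z - z'‖ ^ (1-α) := by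
    rw [← Real.rpow_add hδ0]
    norm_num
  have h1α : ‖z - z'‖ ^ (1-α) ≤ max 1 (2*R) := by
    calc ‖z - z'‖ ^ (1-α) ≤ (max 1 (2*R)) ^ (1-α) :=
          Real.rpow_le_rpow hδ0.le hδR (by linarith [hα.2])
      _ ≤ (max 1 (2*R)) ^ (1:ℝ) :=
          Real.rpow_le_rpow_of_exponent_le (le_max_left _ _) (by linarith [hα.1])
      _ = max 1 (2*R) := Real.rpow_one _
  have T1b : ‖z - z'‖ / r ≤ (max 1 (2*R) / r) * ‖z - z'‖ ^ α := by
    calc ‖z - z'‖ / r = ‖z - z'‖ ^ α * ‖z - z'‖ ^ (1-α) / r := by rw [← hsplit]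
      _ ≤ ‖z - z'‖ ^ α * max 1 (2*R) / r :=
          div_le_div_of_nonneg_right (mul_le_mul_of_nonneg_left h1α hδα.le) hr0.le
      _ = (max 1 (2*R) / r) * ‖z - z'‖ ^ α := by ring
  have T2 : |G (((‖z‖ : ℂ))⁻¹ • z) - G (((‖z'‖ : ℂ))⁻¹ • z')|
      ≤ Cs * ‖((‖z‖ : ℂ))⁻¹ • z - ((‖z'‖ : ℂ))⁻¹ • z'‖ ^ α :=
    hSH _ (hπS z hz) _ (hπS z' hz')
  have T2b : ‖((‖z‖ : ℂ))⁻¹ • z - ((‖z'‖ : ℂ))⁻¹ • z'‖ ≤ 2/r * ‖z - z'‖ :=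
    aux_normalize_lip z z' r hr0 (hrK z hz) (hrK z' hz')
  have T2c : ‖((‖z‖ : ℂ))⁻¹ • z - ((‖z'‖ : ℂ))⁻¹ • z'‖ ^ α
      ≤ max 1 (2/r) * ‖z - z'‖ ^ α := by
    calc ‖((‖z‖ : ℂ))⁻¹ • z - ((‖z'‖ : ℂ))⁻¹ • z'‖ ^ α
        ≤ (2/r * ‖z - z'‖) ^ α :=
          Real.rpow_le_rpow (norm_nonneg _) T2b hα.1.le
      _ = (2/r) ^ α * ‖z - z'‖ ^ α := Real.mul_rpow (by positivity) hδ0.le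
      _ ≤ max 1 (2/r) * ‖z - z'‖ ^ α := by
          apply mul_le_mul_of_nonneg_right _ hδα.le
          calc (2/r) ^ α ≤ (max 1 (2/r)) ^ α :=
                Real.rpow_le_rpow (by positivity) (le_max_right _ _) hα.1.le
            _ ≤ (max 1 (2/r)) ^ (1:ℝ) :=
                Real.rpow_le_rpow_of_exponent_le (le_max_left _ _) hα.2.le
            _ = max 1 (2/r) := Real.rpow_one _
  have T2d : |G (((‖z‖ : ℂ))⁻¹ • z) - G (((‖z'‖ : ℂ))⁻¹ • z')|
      ≤ Cs * (max 1 (2/r) * ‖z - z'‖ ^ α) :=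
    le_trans T2 (mul_le_mul_of_nonneg_left T2c hCs0.le)
  calc |G z - G z'| ≤ ‖z - z'‖ / r
        + Cs * (max 1 (2/r) * ‖z - z'‖ ^ α) := by linarith
    _ ≤ (max 1 (2*R) / r) * ‖z - z'‖ ^ α
        + Cs * (max 1 (2/r) * ‖z - z'‖ ^ α) := by linarith
    _ = (Cs * max 1 (2/r) + max 1 (2*R)/r) * ‖z - z'‖ ^ α := by ring
    _ ≤ Cf * ‖z - z'‖ ^ α := by
        apply mul_le_mul_of_nonneg_right _ hδα.le
        rw [hCfdef]
        linarith
end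
end

section
/- Let 0 < ρ < r and R > 0. For every δ > 0 there exists ε₀ > 0 such that: for every holomorphic function φ on the open disc D(0, r) ⊂ ℂ with values in the punctured disc D(0, R) \ {0}, if inf_{|z| = ρ} |φ(z)| ≤ ε₀ then sup_{|z| ≤ ρ} |φ(z)| ≤ δ. Equivalently, setting M(ε) := sup { sup_{|z| ≤ ρ} |φ(z)| : φ holomorphic from D(0,r) to D(0,R) \ {0} with inf_{|z|=ρ}|φ(z)| ≤ ε }, one has lim_{ε → 0⁺} M(ε) = 0. -/
open Filter Topology

noncomputable section

open Metric Set MeasureTheory intervalIntegral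

lemma exists_holo_log {r : ℝ} {φ : ℂ → ℂ} (hr : 0 < r)
    (hd : DifferentiableOn ℂ φ (ball (0:ℂ) r))
    (hne : ∀ z ∈ ball (0:ℂ) r, φ z ≠ 0) :
    ∃ g : ℂ → ℂ, DifferentiableOn ℂ g (ball (0:ℂ) r) ∧
      ∀ z ∈ ball (0:ℂ) r, Complex.exp (g z) = φ z := by
  set q : ℂ → ℂ := fun w => deriv φ w / φ w with hqdef
  have hqc : ContinuousOn q (ball (0:ℂ) r) := by
    have h1 : DifferentiableOn ℂ (deriv φ) (ball (0:ℂ) r) :=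
      ((hd.analyticOnNhd isOpen_ball).deriv).differentiableOn
    exact h1.continuousOn.div hd.continuousOn hne
  set g : ℂ → ℂ := fun z => Complex.log (φ 0) + ∫ s in (0:ℝ)..1, (z * q ((s:ℂ)*z)) with hgdef
  have h0mem : (0:ℂ) ∈ ball (0:ℂ) r := mem_ball_self hr
  -- Step 2 : exp (g z) = φ z
  have hgexp : ∀ z ∈ ball (0:ℂ) r, Complex.exp (g z) = φ z := by
    intro z hz
    by_cases hz0 : z = 0
    · subst hz0
      simp only [hgdef, zero_mul, intervalIntegral.integral_const, smul_zero, add_zero]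
      exact Complex.exp_log (hne 0 h0mem)
    · set τ : ℝ := r / ‖z‖ with hτdef
      have habsz : 0 < ‖z‖ := norm_pos_iff.mpr hz0
      have hτ : 1 < τ := (one_lt_div habsz).2 (by simpa using mem_ball_zero_iff.1 hz)
      have hmem : ∀ t : ℝ, |t| < τ → (t:ℂ)*z ∈ ball (0:ℂ) r := by
        intro t ht
        rw [mem_ball_zero_iff, norm_mul, Complex.norm_real, Real.norm_eq_abs]
        calc |t| * ‖z‖ < τ * ‖z‖ := by
              exact mul_lt_mul_of_pos_right ht habsz
          _ = r := by rw [hτdef, div_mul_cancel₀ _ habsz.ne']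
      set f : ℝ → ℂ := fun s => z * q ((s:ℂ)*z) with hfdef
      have hfc : ContinuousOn f (Ioo (-τ) τ) := by
        apply continuousOn_const.mul
        apply hqc.comp ((Complex.continuous_ofReal.continuousOn).mul continuousOn_const)
        intro s hs
        exact hmem s (abs_lt.2 ⟨hs.1, hs.2⟩)
      have h0I : (0:ℝ) ∈ Ioo (-τ) τ := ⟨by linarith, by linarith⟩
      have h1I : (1:ℝ) ∈ Ioo (-τ) τ := ⟨by linarith, hτ⟩
      have hI : Icc (0:ℝ) 1 ⊆ Ioo (-τ) τ := fun t ht => ⟨by linarith [ht.1], by linarith [ht.2]⟩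
      set G : ℝ → ℂ := fun t => ∫ s in (0:ℝ)..t, f s with hGdef
      have hG : ∀ t ∈ Ioo (-τ) τ, HasDerivAt G (f t) t := by
        intro t ht
        apply intervalIntegral.integral_hasDerivAt_right
        · exact (hfc.mono (Set.ordConnected_Ioo.uIcc_subset h0I ht)).intervalIntegrable
        · exact hfc.stronglyMeasurableAtFilter isOpen_Ioo t ht
        · exact hfc.continuousAt (isOpen_Ioo.mem_nhds ht)
      set F : ℝ → ℂ := fun t => φ ((t:ℂ)*z) * Complex.exp (-(Complex.log (φ 0) + G t)) with hFdef
      have hF : ∀ t ∈ Ioo (-τ) τ, HasDerivAt F 0 t := by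
        intro t ht
        have htz : (t:ℂ)*z ∈ ball (0:ℂ) r := hmem t (abs_lt.2 ⟨ht.1, ht.2⟩)
        have hφd : DifferentiableAt ℂ φ ((t:ℂ)*z) := hd.differentiableAt (isOpen_ball.mem_nhds htz)
        have h1 : HasDerivAt (fun s:ℝ => φ ((s:ℂ)*z)) (deriv φ ((t:ℂ)*z) * z) t := by
          have hc : HasDerivAt (fun w : ℂ => φ (w*z)) (deriv φ ((t:ℂ)*z) * z) ((t:ℂ)) := by
            exact HasDerivAt.comp (t:ℂ) (hφd.hasDerivAt) (hasDerivAt_mul_const z)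
          exact hc.comp_ofReal
        have h2 : HasDerivAt (fun s:ℝ => Complex.exp (-(Complex.log (φ 0) + G s)))
            (Complex.exp (-(Complex.log (φ 0) + G t)) * (-f t)) t := by
          have hGd : HasDerivAt (fun s:ℝ => -(Complex.log (φ 0) + G s)) (-f t) t :=
            ((hG t ht).const_add (Complex.log (φ 0))).neg
          exact hGd.cexp
        have := h1.mul h2
        convert this using 1
        · rfl
        · rfl
        have hφne := hne _ htz
        simp only [hfdef, hqdef]
        field_simp
        ring
      have hFc : ContinuousOn F (Icc 0 1) := fun t ht =>
        ((hF t (hI ht)).continuousAt.continuousWithinAt)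
      have hconst := constant_of_has_deriv_right_zero hFc
        (fun t ht => ((hF t (hI ⟨ht.1, ht.2.le⟩)).hasDerivWithinAt))
      have hF1 : F 1 = F 0 := hconst 1 (right_mem_Icc.2 zero_le_one)
      have hG0 : G 0 = 0 := intervalIntegral.integral_same
      have hφ0 := hne 0 h0mem
      have hF0 : F 0 = 1 := by
        simp only [hFdef, hG0, Complex.ofReal_zero, zero_mul, add_zero, Complex.exp_neg,
          Complex.exp_log hφ0]
        field_simp
      rw [hF0] at hF1
      have hgz : g z = Complex.log (φ 0) + G 1 := rfl
      have : φ ((1:ℂ)*z) * Complex.exp (-(g z)) = 1 := by rw [hgz]; exact hF1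
      rw [one_mul, Complex.exp_neg] at this
      field_simp at this
      rw [this]
  -- Step 1 : continuity of g
  have hgcont : ∀ z ∈ ball (0:ℂ) r, ContinuousAt g z := by
    intro z₁ hz₁
    apply ContinuousAt.add continuousAt_const
    set b : ℝ := (‖z₁‖ + r)/2 with hbdef
    have hz₁r : ‖z₁‖ < r := by simpa using mem_ball_zero_iff.1 hz₁
    have hb1 : ‖z₁‖ < b := by simp [hbdef]; linarith
    have hb2 : b < r := by simp [hbdef]; linarith
    have hb0 : 0 ≤ b := le_trans (norm_nonneg z₁) hb1.le
    obtain ⟨C, hC⟩ := (isCompact_closedBall (0:ℂ) b).exists_bound_of_continuousOn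
      (hqc.mono (closedBall_subset_ball hb2))
    have hball : ball (0:ℂ) b ∈ 𝓝 z₁ := isOpen_ball.mem_nhds (mem_ball_zero_iff.2 hb1)
    have hsub : ∀ z ∈ ball (0:ℂ) b, ∀ t ∈ Set.uIoc (0:ℝ) 1, (t:ℂ)*z ∈ closedBall (0:ℂ) b := by
      intro z hzb t htI
      rw [Set.uIoc_of_le zero_le_one] at htI
      rw [mem_closedBall_zero_iff, norm_mul, Complex.norm_real, Real.norm_eq_abs,
        abs_of_pos htI.1]
      calc t * ‖z‖ ≤ 1 * ‖z‖ := by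
            exact mul_le_mul_of_nonneg_right htI.2 (norm_nonneg z)
        _ ≤ b := by rw [one_mul]; exact (by simpa using mem_ball_zero_iff.1 hzb : ‖z‖ < b).le
    apply intervalIntegral.continuousAt_of_dominated_interval (bound := fun _ => b * C)
    · filter_upwards [hball] with z hzb
      apply ContinuousOn.aestronglyMeasurable _ measurableSet_uIoc
      apply continuousOn_const.mul
      apply hqc.comp ((Complex.continuous_ofReal.continuousOn).mul continuousOn_const)
      intro t ht
      exact closedBall_subset_ball hb2 (hsub z hzb t ht)
    · filter_upwards [hball] with z hzb
      apply ae_of_all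
      intro t ht
      rw [norm_mul]
      apply mul_le_mul (le_of_lt _) (hC _ (hsub z hzb t ht)) (norm_nonneg _) hb0
      simpa using mem_ball_zero_iff.1 hzb
    · exact intervalIntegrable_const
    · apply ae_of_all
      intro t ht
      rw [Set.uIoc_of_le zero_le_one] at ht
      have htz₁ : (t:ℂ)*z₁ ∈ ball (0:ℂ) r := by
        rw [mem_ball_zero_iff, norm_mul, Complex.norm_real, Real.norm_eq_abs, abs_of_pos ht.1]
        calc t * ‖z₁‖ ≤ 1 * ‖z₁‖ :=
              mul_le_mul_of_nonneg_right ht.2 (norm_nonneg z₁)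
          _ < r := by rw [one_mul]; exact hz₁r
      apply ContinuousAt.mul continuousAt_id
      exact (hqc.continuousAt (isOpen_ball.mem_nhds htz₁)).comp
        ((continuous_const.mul continuous_id).continuousAt)
  -- Step 3 : differentiability
  refine ⟨g, fun z₁ hz₁ => ?_, hgexp⟩
  have hc := hne z₁ hz₁
  have hφd : DifferentiableAt ℂ φ z₁ := hd.differentiableAt (isOpen_ball.mem_nhds hz₁)
  set ℓ : ℂ → ℂ := fun z => g z₁ + Complex.log (φ z / φ z₁) with hℓdef
  have ev1 : ∀ᶠ z in 𝓝 z₁, z ∈ ball (0:ℂ) r := isOpen_ball.eventually_mem hz₁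
  have htend : Tendsto (fun z => φ z / φ z₁) (𝓝 z₁) (𝓝 1) := by
    simpa only [ContinuousAt, div_self hc] using hφd.continuousAt.div_const (φ z₁)
  have ev2 : ∀ᶠ z in 𝓝 z₁, φ z / φ z₁ ∈ ball (1:ℂ) 1 :=
    htend.eventually_mem (ball_mem_nhds 1 one_pos)
  have hslit : ∀ w : ℂ, w ∈ ball (1:ℂ) 1 → w ∈ Complex.slitPlane := by
    intro w hw
    rw [mem_ball_iff_norm] at hw
    apply Complex.mem_slitPlane_iff.2
    left
    have h1 : |(w - 1).re| < 1 := lt_of_le_of_lt (Complex.abs_re_le_norm _) hw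
    have h2 : (w - 1).re = w.re - 1 := by simp
    rw [h2] at h1
    linarith [(abs_lt.1 h1).1]
  have hℓcont : ContinuousAt ℓ z₁ := by
    apply ContinuousAt.add continuousAt_const
    have h1 : ContinuousAt Complex.log (φ z₁ / φ z₁) := by
      rw [div_self hc]; exact continuousAt_clog Complex.one_mem_slitPlane
    exact ContinuousAt.comp (g := Complex.log) (f := fun z => φ z / φ z₁) h1
      (hφd.continuousAt.div_const _)
  have hdcont : ContinuousAt (fun z => g z - ℓ z) z₁ :=
    (hgcont z₁ hz₁).sub hℓcont
  have hd0 : g z₁ - ℓ z₁ = 0 := by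
    simp [hℓdef, div_self hc, Complex.log_one]
  have ev3 : ∀ᶠ z in 𝓝 z₁, g z - ℓ z ∈ ball (0:ℂ) 1 := by
    have := hdcont.tendsto
    rw [hd0] at this
    exact this.eventually_mem (ball_mem_nhds 0 one_pos)
  have heq : g =ᶠ[𝓝 z₁] ℓ := by
    filter_upwards [ev1, ev2, ev3] with z hz hz2 hz3
    have hφz := hne z hz
    have hfrac : φ z / φ z₁ ≠ 0 := div_ne_zero hφz hc
    have hexpd : Complex.exp (g z - ℓ z) = 1 := by
      rw [Complex.exp_sub, hgexp z hz]
      rw [hℓdef]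
      simp only [Complex.exp_add, Complex.exp_log hfrac, hgexp z₁ hz₁]
      field_simp
    obtain ⟨n, hn⟩ := Complex.exp_eq_one_iff.1 hexpd
    have hlt : ‖g z - ℓ z‖ < 1 := by simpa using mem_ball_zero_iff.1 hz3
    rw [hn] at hlt
    have : (n:ℂ) = 0 := by
      by_contra hn0
      have h1 : (1:ℝ) ≤ ‖(n:ℂ)‖ := by
        have : (1:ℝ) ≤ |(n:ℝ)| := by
          rw [← Int.cast_abs]
          exact_mod_cast Int.one_le_abs (by exact_mod_cast fun h => hn0 (by exact_mod_cast h))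
        simpa using this
      have h2 : ‖((n:ℂ) * (2 * Real.pi * Complex.I))‖ =
          ‖(n:ℂ)‖ * (2 * Real.pi) := by
        simp [map_mul, abs_of_pos Real.pi_pos]
      rw [h2] at hlt
      nlinarith [Real.pi_gt_three]
    rw [this, zero_mul] at hn
    have := sub_eq_zero.1 hn
    exact this
  have hℓdiff : DifferentiableAt ℂ ℓ z₁ := by
    have h2 : DifferentiableAt ℂ Complex.log (φ z₁ / φ z₁) := by
      rw [div_self hc]; exact Complex.differentiableAt_log Complex.one_mem_slitPlane
    exact DifferentiableAt.add (differentiableAt_const _)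
      (DifferentiableAt.comp (g := Complex.log) (f := fun z => φ z / φ z₁) z₁ h2
        (hφd.div_const _))
  exact (heq.differentiableAt_iff.2 hℓdiff).differentiableWithinAt

lemma key_ident (w a : ℂ) :
    ‖w + (starRingEnd ℂ) a‖ ^ 2 - ‖w - a‖ ^ 2 = 4 * w.re * a.re := by
  rw [Complex.sq_norm, Complex.sq_norm]
  simp only [Complex.normSq_apply, Complex.add_re, Complex.add_im, Complex.sub_re,
    Complex.sub_im, Complex.conj_re, Complex.conj_im]
  ring

lemma harnack_aux {w a : ℂ} {k : ℝ} (hw : 0 < w.re) (ha : 0 < a.re) (hk : 0 ≤ k) (hk1 : k < 1)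
    (hab : ‖w - a‖ ≤ k * ‖w + (starRingEnd ℂ) a‖) :
    (1 - k) * a.re ≤ (1 + k) * w.re ∧ (1 - k) * w.re ≤ (1 + k) * a.re := by
  set D := ‖w + (starRingEnd ℂ) a‖ with hD
  have hD0 : 0 ≤ D := norm_nonneg _
  have key := key_ident w a
  have h1 : ‖w - a‖ ^ 2 ≤ k ^ 2 * D ^ 2 := by
    have := pow_le_pow_left₀ (norm_nonneg (w - a)) hab 2
    calc ‖w - a‖ ^ 2 ≤ (k * D) ^ 2 := this
      _ = k ^ 2 * D ^ 2 := by ring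
  have h2 : w.re + a.re ≤ D := by
    have := Complex.re_le_norm (w + (starRingEnd ℂ) a)
    simpa [Complex.add_re, Complex.conj_re] using this
  have h3 : (1 - k ^ 2) * D ^ 2 ≤ 4 * w.re * a.re := by nlinarith
  have h4 : (1 - k ^ 2) * (w.re + a.re) ^ 2 ≤ (1 - k ^ 2) * D ^ 2 := by
    apply mul_le_mul_of_nonneg_left _ (by nlinarith)
    exact pow_le_pow_left₀ (by linarith) h2 2
  have h5 : (w.re - a.re) ^ 2 ≤ (k * (w.re + a.re)) ^ 2 := by nlinarith
  have h6 := abs_le_of_sq_le_sq' h5 (by positivity)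
  constructor <;> linarith [h6.1, h6.2]

theorem stmt17 (ρ r R : ℝ) (hρ : 0 < ρ) (hρr : ρ < r) (hR : 0 < R) :
    ∀ δ > (0 : ℝ), ∃ ε₀ > (0 : ℝ), ∀ φ : ℂ → ℂ,
      DifferentiableOn ℂ φ (Metric.ball (0 : ℂ) r) →
      (∀ z ∈ Metric.ball (0 : ℂ) r, φ z ∈ Metric.ball (0 : ℂ) R ∧ φ z ≠ 0) →
      sInf ((fun z => ‖φ z‖) '' Metric.sphere (0 : ℂ) ρ) ≤ ε₀ →
      ∀ z : ℂ, ‖z‖ ≤ ρ → ‖φ z‖ ≤ δ := by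
  have hr0 : 0 < r := hρ.trans hρr
  set k : ℝ := ρ / r with hkdef
  have hk0 : 0 < k := div_pos hρ hr0
  have hk1 : k < 1 := (div_lt_one hr0).2 hρr
  set c : ℝ := ((1 - k) / (1 + k)) ^ 2 with hcdef
  have hc0 : 0 < c := by
    have h1 : 0 < 1 - k := by linarith
    have h2 : 0 < 1 + k := by linarith
    positivity
  intro δ hδ
  set m₀ : ℝ := min 1 (δ / R) with hm₀def
  have hm₀ : 0 < m₀ := lt_min one_pos (div_pos hδ hR)
  refine ⟨R * m₀ ^ (1 / c), mul_pos hR (Real.rpow_pos_of_pos hm₀ _), ?_⟩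
  set ε₀ : ℝ := R * m₀ ^ (1 / c) with hε₀def
  have hε₀pos : 0 < ε₀ := mul_pos hR (Real.rpow_pos_of_pos hm₀ _)
  intro φ hdφ hmaps hinf z hzρ
  obtain ⟨g, hg, hge⟩ := exists_holo_log hr0 hdφ (fun w hw => (hmaps w hw).2)
  -- basic facts
  have habsφ : ∀ w ∈ ball (0:ℂ) r, ‖φ w‖ = Real.exp ((g w).re) := by
    intro w hw; rw [← hge w hw, Complex.norm_exp]
  have hre_log : ∀ w ∈ ball (0:ℂ) r, (g w).re = Real.log (‖φ w‖) := by
    intro w hw; rw [habsφ w hw, Real.log_exp]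
  have hlt : ∀ w ∈ ball (0:ℂ) r, (g w).re < Real.log R := by
    intro w hw
    have h1 : ‖φ w‖ < R := by
      have := (hmaps w hw).1
      simpa [mem_ball_zero_iff] using this
    rw [hre_log w hw]
    exact Real.log_lt_log (norm_pos_iff.mpr (hmaps w hw).2) h1
  set h : ℂ → ℂ := fun w => (Real.log R : ℂ) - g w with hhdef
  have hh : DifferentiableOn ℂ h (ball (0:ℂ) r) :=
    (differentiableOn_const _).sub hg
  have hre : ∀ w ∈ ball (0:ℂ) r, 0 < (h w).re := by
    intro w hw
    simp only [hhdef, Complex.sub_re, Complex.ofReal_re]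
    linarith [hlt w hw]
  have h0mem : (0:ℂ) ∈ ball (0:ℂ) r := mem_ball_self hr0
  set a : ℂ := h 0 with hadef
  have ha : 0 < a.re := hre 0 h0mem
  -- the Möbius transform
  set F : ℂ → ℂ := fun w => (h w - a) / (h w + (starRingEnd ℂ) a) with hFdef
  have hden : ∀ w ∈ ball (0:ℂ) r, h w + (starRingEnd ℂ) a ≠ 0 := by
    intro w hw hzero
    have : (h w + (starRingEnd ℂ) a).re = (h w).re + a.re := by
      simp [Complex.add_re, Complex.conj_re]
    rw [hzero] at this
    simp at this
    linarith [hre w hw]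
  have hFd : DifferentiableOn ℂ F (ball (0:ℂ) r) :=
    (hh.sub (differentiableOn_const _)).div (hh.add (differentiableOn_const _)) hden
  have hF0 : F 0 = 0 := by simp [hFdef, ← hadef]
  have hFmaps : MapsTo F (ball (0:ℂ) r) (ball (F 0) 1) := by
    intro w hw
    rw [hF0, mem_ball_zero_iff, hFdef]
    rw [norm_div, div_lt_one (norm_pos_iff.mpr (hden w hw))]
    have hkey := key_ident (h w) a
    have hpos : 0 < 4 * (h w).re * a.re := by
      have := hre w hw; positivity
    have hsq : ‖h w - a‖ ^ 2 < ‖h w + (starRingEnd ℂ) a‖ ^ 2 := by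
      linarith
    exact lt_of_pow_lt_pow_left₀ 2 (norm_nonneg _) hsq
  -- Schwarz estimate
  have hschwarz : ∀ w : ℂ, ‖w‖ ≤ ρ →
      ‖h w - a‖ ≤ k * ‖h w + (starRingEnd ℂ) a‖ := by
    intro w hwρ
    have hw : w ∈ ball (0:ℂ) r := by
      rw [mem_ball_zero_iff]; linarith
    have := Complex.dist_le_div_mul_dist_of_mapsTo_ball hFd (hFmaps.mono_right ball_subset_closedBall) hw
    rw [hF0, dist_zero_right, dist_zero_right] at this
    have hFw : ‖F w‖ ≤ k := by
      calc ‖F w‖ ≤ 1 / r * ‖w‖ := this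
        _ ≤ 1 / r * ρ := by
            apply mul_le_mul_of_nonneg_left hwρ (by positivity)
        _ = k := by rw [hkdef]; ring
    have habsF : ‖F w‖ = ‖h w - a‖ / ‖h w + (starRingEnd ℂ) a‖ :=
      norm_div _ _
    rw [habsF, div_le_iff₀ (norm_pos_iff.mpr (hden w hw))] at hFw
    linarith [hFw]
  -- Harnack inequality at each point of the closed disc of radius ρ
  have hHar : ∀ w : ℂ, ‖w‖ ≤ ρ →
      (1 - k) * a.re ≤ (1 + k) * (h w).re ∧ (1 - k) * (h w).re ≤ (1 + k) * a.re := by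
    intro w hwρ
    have hw : w ∈ ball (0:ℂ) r := by
      rw [mem_ball_zero_iff]; linarith
    exact harnack_aux (hre w hw) ha hk0.le hk1 (hschwarz w hwρ)
  -- a point realizing the infimum on the circle
  have hsub : sphere (0:ℂ) ρ ⊆ ball (0:ℂ) r := sphere_subset_ball hρr
  have hScomp : IsCompact ((fun z => ‖φ z‖) '' sphere (0:ℂ) ρ) :=
    (isCompact_sphere 0 ρ).image_of_continuousOn
      (continuous_norm.comp_continuousOn (hdφ.continuousOn.mono hsub))
  have hSne : ((fun z => ‖φ z‖) '' sphere (0:ℂ) ρ).Nonempty :=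
    ((NormedSpace.sphere_nonempty).2 hρ.le).image _
  obtain ⟨z₀, hz₀sph, hz₀val⟩ := hScomp.sInf_mem hSne
  have hz₀ρ : ‖z₀‖ = ρ := by
    simpa using mem_sphere_zero_iff_norm.1 hz₀sph
  have hz₀ball : z₀ ∈ ball (0:ℂ) r := hsub hz₀sph
  have hφz₀pos : 0 < ‖φ z₀‖ := norm_pos_iff.mpr (hmaps z₀ hz₀ball).2
  have hz₀ε : ‖φ z₀‖ ≤ ε₀ := by
    have heq : ‖φ z₀‖ =
        sInf ((fun z => ‖φ z‖) '' Metric.sphere (0 : ℂ) ρ) := hz₀val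
    rw [heq]; exact hinf
  -- the chain of inequalities
  have hzball : z ∈ ball (0:ℂ) r := by
    rw [mem_ball_zero_iff]; linarith
  have A1 := (hHar z hzρ).1
  have A2 := (hHar z₀ (le_of_eq hz₀ρ)).2
  have hq : (0:ℝ) < 1 + k := by linarith
  have hp : (0:ℝ) < 1 - k := by linarith
  have step : c * (h z₀).re ≤ (h z).re := by
    have e1 : (1 - k) / (1 + k) * a.re ≤ (h z).re := by
      rw [div_mul_eq_mul_div, div_le_iff₀ hq]
      linarith
    have e2 : (1 - k) / (1 + k) * (h z₀).re ≤ a.re := by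
      rw [div_mul_eq_mul_div, div_le_iff₀ hq]
      linarith
    calc c * (h z₀).re = (1 - k) / (1 + k) * ((1 - k) / (1 + k) * (h z₀).re) := by
          rw [hcdef]; ring
      _ ≤ (1 - k) / (1 + k) * a.re :=
          mul_le_mul_of_nonneg_left e2 (div_nonneg hp.le hq.le)
      _ ≤ (h z).re := e1
  have hu : ∀ w, w ∈ ball (0:ℂ) r →
      (h w).re = Real.log R - Real.log (‖φ w‖) := by
    intro w hw
    simp only [hhdef, Complex.sub_re, Complex.ofReal_re]
    rw [hre_log w hw]
  have hlogε₀ : Real.log ε₀ = Real.log R + (1 / c) * Real.log m₀ := by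
    rw [hε₀def, Real.log_mul (ne_of_gt hR) (by positivity), Real.log_rpow hm₀]
  have hz₀low : Real.log R - Real.log ε₀ ≤ (h z₀).re := by
    rw [hu z₀ hz₀ball]
    have : Real.log (‖φ z₀‖) ≤ Real.log ε₀ := Real.log_le_log hφz₀pos hz₀ε
    linarith
  have hfinal : Real.log (‖φ z‖) ≤ Real.log R + Real.log m₀ := by
    have h1 : c * (Real.log R - Real.log ε₀) ≤ (h z).re :=
      le_trans (mul_le_mul_of_nonneg_left hz₀low hc0.le) step
    rw [hu z hzball] at h1
    have h2 : c * (Real.log R - Real.log ε₀) = - Real.log m₀ := by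
      have hcne : c ≠ 0 := ne_of_gt hc0
      rw [hlogε₀]
      field_simp
      ring
    linarith [h1, h2 ▸ h1]
  have hφzpos : 0 < ‖φ z‖ := norm_pos_iff.mpr (hmaps z hzball).2
  calc ‖φ z‖ = Real.exp (Real.log (‖φ z‖)) :=
        (Real.exp_log hφzpos).symm
    _ ≤ Real.exp (Real.log R + Real.log m₀) := Real.exp_le_exp.2 hfinal
    _ = R * m₀ := by rw [Real.exp_add, Real.exp_log hR, Real.exp_log hm₀]
    _ ≤ R * (δ / R) := mul_le_mul_of_nonneg_left (min_le_right _ _) hR.le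
    _ = δ := by field_simp
end
end
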